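/- arXiv:1502.01049 — 10 statements merged into one kernel-verified Lean document; each statement's English description precedes it below -/
import Mathlib

section
/- Let t₀ < t_f be real numbers, let ε > 0 with ε ≤ t_f − t₀, and let d ≥ 1 be an integer. There exists an open dense subset S of (ℂ^{d×d})⁴ (product of standard topologies on matrix spaces) such that for every quadruple (c₋₁, c₀, c₁, α) ∈ S and every function f : ℝ → ℂ^d there exists a unique function u : ℝ → ℂ^d satisfying, for every t ∈ ℝ, α ⬝ u(t) + Σ_{k=−1}^{1} χ(t+kε) · (c_k ⬝ u(t+kε)) = f(t). -/
/-!
The equation couples the values of `u` only along the orbits `t + ℤ ε`, so it splits into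
independent equations for sequences on `ℤ`. On an orbit, `χ` is the indicator of a run of
`m ≤ N` consecutive points, with `N` independent of the orbit. The values of `u` on the run
solve a finite block tridiagonal system `windowMatrix m`, and every other value is then `α⁻¹`
applied to `f` minus the neighbouring terms. Hence the equation is uniquely solvable once `α`
and the finitely many matrices `windowMatrix m`, `m ≤ N`, are invertible. This condition is
open, and it is dense because replacing `α` by `α + z • 1` shifts each of these matrices by
`z • 1`.
-/

open Matrix

/-- The indicator function of the closed interval `[t₀, t_f]`. -/
noncomputable def chi (t₀ t_f : ℝ) : ℝ → ℝ :=
  Set.indicator (Set.Icc t₀ t_f) (fun _ => (1 : ℝ))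

open Function

def orbit (ε t : ℝ) (j : ℤ) : ℝ := t + j * ε

@[simp]
lemma orbit_zero (ε t : ℝ) : orbit ε t 0 = t := by simp [orbit]

lemma orbit_add_one (ε t : ℝ) (j : ℤ) : orbit ε t (j + 1) = orbit ε t j + ε := by
  simp [orbit]; ring

lemma orbit_orbit (ε t : ℝ) (j : ℤ) : orbit ε (orbit ε t j) = orbit ε t ∘ (· + j) := by
  funext k; simp [orbit]; ring

section ConvOp

variable {n G H : Type*} [Fintype n] [AddGroup G] [AddGroup H]
  (cm c0 c1 α : Matrix n n ℂ)

/-- `convOp cm c0 c1 α χ s` is the paper's `u ↦ α u + 𝒞 ⋆ (χ u)` for the three-point kernel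
`𝒞 = c₋₁ δ₋ₛ + c₀ δ₀ + c₁ δₛ`. -/
noncomputable def convOp (χ : G → ℝ) (s : G) : (G → n → ℂ) →ₗ[ℂ] G → n → ℂ where
  toFun u t := α *ᵥ u t
    + (χ (t - s) • cm *ᵥ u (t - s) + χ t • c0 *ᵥ u t + χ (t + s) • c1 *ᵥ u (t + s))
  map_add' u v := by
    funext t
    simp only [Pi.add_apply, mulVec_add, smul_add]
    abel
  map_smul' c u := by
    funext t
    simp only [Pi.smul_apply, mulVec_smul, smul_add, RingHom.id_apply, smul_comm c]

variable {cm c0 c1 α}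

@[simp]
lemma convOp_apply (χ : G → ℝ) (s : G) (u : G → n → ℂ) (t : G) :
    convOp cm c0 c1 α χ s u t = α *ᵥ u t
      + (χ (t - s) • cm *ᵥ u (t - s) + χ t • c0 *ᵥ u t + χ (t + s) • c1 *ᵥ u (t + s)) :=
  rfl

lemma convOp_comp {χ : G → ℝ} {s : G} {s' : H} {ι : H → G} (hι : ∀ j, ι (j + s') = ι j + s)
    (u : G → n → ℂ) :
    convOp cm c0 c1 α χ s u ∘ ι = convOp cm c0 c1 α (χ ∘ ι) s' (u ∘ ι) := by
  have hι' : ∀ j, ι (j - s') = ι j - s := fun j => by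
    rw [eq_sub_iff_add_eq, ← hι, sub_add_cancel]
  funext j
  simp [hι, hι']

lemma convOp_apply_congr {χ : G → ℝ} {s : G} {u u' : G → n → ℂ}
    (h : ∀ k, χ k ≠ 0 → u k = u' k) {t : G} (ht : χ t ≠ 0) :
    convOp cm c0 c1 α χ s u t = convOp cm c0 c1 α χ s u' t := by
  have hweighted : ∀ k (M : Matrix n n ℂ), χ k • M *ᵥ u k = χ k • M *ᵥ u' k := fun k M => by
    by_cases hk : χ k = 0
    · simp [hk]
    · rw [h k hk]
  simp only [convOp_apply, hweighted, h t ht]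

lemma convOp_apply_of_eq_zero_on_support {χ : G → ℝ} {s : G} {u : G → n → ℂ}
    (h : ∀ k, χ k ≠ 0 → u k = 0) (t : G) : convOp cm c0 c1 α χ s u t = α *ᵥ u t := by
  have hweighted : ∀ k (M : Matrix n n ℂ), χ k • M *ᵥ u k = 0 := fun k M => by
    by_cases hk : χ k = 0
    · simp [hk]
    · simp [h k hk]
  simp only [convOp_apply, hweighted, add_zero]

lemma convOp_add_smul_one [DecidableEq n] (χ : G → ℝ) (s : G) (z : ℂ) :
    convOp cm c0 c1 (α + z • 1) χ s = convOp cm c0 c1 α χ s + z • LinearMap.id :=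
  LinearMap.ext fun u => funext fun t => by
    simp only [convOp_apply, add_mulVec, smul_mulVec, one_mulVec, LinearMap.add_apply,
      LinearMap.smul_apply, LinearMap.id_apply, Pi.add_apply, Pi.smul_apply]
    abel

lemma bijective_convOp_of_equiv {χ : G → ℝ} {s : G} {s' : H} (e : H ≃ G)
    (he : ∀ j, e (j + s') = e j + s) (h : Bijective (convOp cm c0 c1 α (χ ∘ e) s')) :
    Bijective (convOp cm c0 c1 α χ s) := by
  have hcomp : Bijective fun u : G → n → ℂ => u ∘ e :=
    ⟨e.surjective.injective_comp_right, e.injective.surjective_comp_right⟩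
  rw [← hcomp.of_comp_iff']
  convert h.comp hcomp using 1
  funext u
  exact convOp_comp he u


theorem bijective_convOp_of_orbit {χ : ℝ → ℝ} {ε : ℝ}
    (h : ∀ t, Bijective (convOp cm c0 c1 α (χ ∘ orbit ε t) 1)) :
    Bijective (convOp cm c0 c1 α χ ε) := by
  have hrestrict : ∀ u t, convOp cm c0 c1 α χ ε u ∘ orbit ε t
      = convOp cm c0 c1 α (χ ∘ orbit ε t) 1 (u ∘ orbit ε t) :=
    fun u t => convOp_comp (orbit_add_one ε t) u
  refine ⟨fun u u' huu => funext fun t => ?_, fun f => ?_⟩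
  · have := (h t).1 (by rw [← hrestrict, ← hrestrict, huu] :
      convOp cm c0 c1 α (χ ∘ orbit ε t) 1 (u ∘ orbit ε t)
        = convOp cm c0 c1 α (χ ∘ orbit ε t) 1 (u' ∘ orbit ε t))
    simpa using congrFun this 0
  · choose v hv using fun t => (h t).2 (f ∘ orbit ε t)
    have hshift : ∀ t j, v (orbit ε t j) = v t ∘ (· + j) := fun t j => (h _).1 <| by
      have := convOp_comp (cm := cm) (c0 := c0) (c1 := c1) (α := α) (χ := χ ∘ orbit ε t)
        (ι := (· + j)) (fun k => add_right_comm k 1 j) (v t)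
      rw [hv] at this
      rw [hv, orbit_orbit]
      exact this
    refine ⟨fun t => v t 0, funext fun t => ?_⟩
    have hu : (fun t => v t 0) ∘ orbit ε t = v t := funext fun j => by simp [hshift]
    have := congrFun (hrestrict (fun t => v t 0) t) 0
    rw [hu, hv] at this
    simpa only [Function.comp_apply, orbit_zero] using this

end ConvOp

section Window

variable {n : Type*} (m : ℕ)

noncomputable def windowWeight : ℤ → ℝ := Set.indicator (Set.Ico 0 m) fun _ => 1

lemma windowWeight_ne_zero_iff {j : ℤ} : windowWeight m j ≠ 0 ↔ 0 ≤ j ∧ j < m := by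
  simp [windowWeight, Set.indicator_apply]

variable (n) in
def windowRestrict : (ℤ → n → ℂ) →ₗ[ℂ] Fin m × n → ℂ where
  toFun v p := v p.1 p.2
  map_add' _ _ := rfl
  map_smul' _ _ := rfl

variable (n) in
noncomputable def windowExtend : (Fin m × n → ℂ) →ₗ[ℂ] ℤ → n → ℂ where
  toFun w j := if h : 0 ≤ j ∧ j < m then fun x => w (⟨j.toNat, by omega⟩, x) else 0
  map_add' w w' := by
    funext j x
    by_cases h : 0 ≤ j ∧ j < m <;> simp [h]
  map_smul' c w := by
    funext j x
    by_cases h : 0 ≤ j ∧ j < m <;> simp [h]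

@[simp]
lemma windowRestrict_apply (v : ℤ → n → ℂ) (i : Fin m) (x : n) :
    windowRestrict n m v (i, x) = v i x :=
  rfl

@[simp]
lemma windowRestrict_windowExtend (w : Fin m × n → ℂ) :
    windowRestrict n m (windowExtend n m w) = w := by
  funext ⟨i, x⟩
  simp [windowRestrict, windowExtend]

lemma windowExtend_windowRestrict_of_ne_zero (v : ℤ → n → ℂ) {j : ℤ}
    (hj : windowWeight m j ≠ 0) : windowExtend n m (windowRestrict n m v) j = v j := by
  rw [windowWeight_ne_zero_iff] at hj
  simp [windowRestrict, windowExtend, hj, Int.toNat_of_nonneg hj.1]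

lemma apply_eq_of_windowRestrict_eq {v v' : ℤ → n → ℂ}
    (h : windowRestrict n m v = windowRestrict n m v') {k : ℤ} (hk : windowWeight m k ≠ 0) :
    v k = v' k := by
  rw [← windowExtend_windowRestrict_of_ne_zero m v hk, h,
    windowExtend_windowRestrict_of_ne_zero m v' hk]

variable [Fintype n] [DecidableEq n]

/-- The finite section of `convOp (windowWeight m) 1`: a block tridiagonal matrix with
diagonal blocks `α + c₀`, superdiagonal blocks `c₁` and subdiagonal blocks `c₋₁`. -/
noncomputable def windowMatrix (cm c0 c1 α : Matrix n n ℂ) : Matrix (Fin m × n) (Fin m × n) ℂ :=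
  LinearMap.toMatrix'
    (windowRestrict n m ∘ₗ convOp cm c0 c1 α (windowWeight m) 1 ∘ₗ windowExtend n m)

variable {cm c0 c1 α : Matrix n n ℂ}

lemma windowMatrix_mulVec_windowRestrict (v : ℤ → n → ℂ) :
    windowMatrix m cm c0 c1 α *ᵥ windowRestrict n m v
      = windowRestrict n m (convOp cm c0 c1 α (windowWeight m) 1 v) := by
  rw [windowMatrix, ← Matrix.toLin'_apply, Matrix.toLin'_toMatrix']
  funext ⟨i, x⟩
  have hi : windowWeight m i ≠ 0 := by simp [windowWeight_ne_zero_iff]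
  rw [LinearMap.comp_apply, LinearMap.comp_apply, windowRestrict_apply, windowRestrict_apply,
    convOp_apply_congr (χ := windowWeight m)
      (fun k hk => windowExtend_windowRestrict_of_ne_zero m v hk) hi]

lemma windowMatrix_add_smul_one (z : ℂ) :
    windowMatrix m cm c0 c1 (α + z • 1) = windowMatrix m cm c0 c1 α + z • 1 := by
  have hid : windowRestrict n m ∘ₗ windowExtend n m = LinearMap.id :=
    LinearMap.ext (windowRestrict_windowExtend m)
  rw [windowMatrix, windowMatrix, convOp_add_smul_one, LinearMap.add_comp, LinearMap.comp_add,
    LinearMap.smul_comp, LinearMap.comp_smul, LinearMap.id_comp, hid, map_add, map_smul,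
    LinearMap.toMatrix'_id]

lemma Continuous.windowMatrix {X : Type*} [TopologicalSpace X] {cm c0 c1 α : X → Matrix n n ℂ}
    (hcm : Continuous cm) (hc0 : Continuous c0) (hc1 : Continuous c1) (hα : Continuous α) :
    Continuous fun x => windowMatrix m (cm x) (c0 x) (c1 x) (α x) := by
  refine continuous_pi fun a => continuous_pi fun b => ?_
  simp only [_root_.windowMatrix, LinearMap.toMatrix'_apply, LinearMap.comp_apply, windowRestrict,
    LinearMap.coe_mk, AddHom.coe_mk, convOp_apply]
  fun_prop

theorem bijective_convOp_windowWeight (hα : IsUnit α) (hT : IsUnit (windowMatrix m cm c0 c1 α)) :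
    Bijective (convOp cm c0 c1 α (windowWeight m) 1) := by
  have hαinj := mulVec_injective_iff_isUnit.2 hα
  refine ⟨(injective_iff_map_eq_zero _).2 fun v hv => funext fun t => hαinj ?_, fun g => ?_⟩
  · have hwin : windowRestrict n m v = windowRestrict n m 0 :=
      mulVec_injective_iff_isUnit.2 hT <| by
        rw [windowMatrix_mulVec_windowRestrict, windowMatrix_mulVec_windowRestrict, hv]
        simp only [map_zero]
    have hv₀ : ∀ k, windowWeight m k ≠ 0 → v k = 0 := fun k hk =>
      (apply_eq_of_windowRestrict_eq m hwin hk).trans rfl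
    rw [← convOp_apply_of_eq_zero_on_support hv₀ t, hv, Pi.zero_apply, mulVec_zero]
  · obtain ⟨w, hw⟩ := mulVec_surjective_iff_isUnit.2 hT (windowRestrict n m g)
    set v₀ := windowExtend n m w
    have hv₀ : windowRestrict n m (convOp cm c0 c1 α (windowWeight m) 1 v₀)
        = windowRestrict n m g := by
      rw [← windowMatrix_mulVec_windowRestrict, windowRestrict_windowExtend, hw]
    choose r hr using fun t => mulVec_surjective_iff_isUnit.2 hα
      (g t - convOp cm c0 c1 α (windowWeight m) 1 v₀ t)
    have hr₀ : ∀ k, windowWeight m k ≠ 0 → r k = 0 := fun k hk => hαinj <| by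
      rw [hr, mulVec_zero, apply_eq_of_windowRestrict_eq m hv₀ hk, sub_self]
    refine ⟨v₀ + r, funext fun t => ?_⟩
    rw [map_add, Pi.add_apply, convOp_apply_of_eq_zero_on_support hr₀, hr]
    abel

end Window

section Generic

variable {n X : Type*} [Fintype n] [DecidableEq n] [TopologicalSpace X]

lemma isOpen_setOf_isUnit {F : X → Matrix n n ℂ} (hF : Continuous F) :
    IsOpen {x | IsUnit (F x)} := by
  simp_rw [isUnit_iff_isUnit_det, isUnit_iff_ne_zero]
  exact isOpen_ne_fun hF.matrix_det continuous_const

/-- `F x + z • 1` is invertible for every `z` outside the finite spectrum of `-F x`. -/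
lemma dense_setOf_isUnit [AddCommGroup X] [Module ℂ X] [ContinuousAdd X] [ContinuousSMul ℂ X]
    {F : X → Matrix n n ℂ} (e : X) (hF : ∀ x (z : ℂ), F (x + z • e) = F x + z • 1) :
    Dense {x | IsUnit (F x)} := by
  intro x
  have hZ : Dense (spectrum ℂ (-F x))ᶜ := (Matrix.finite_spectrum _).countable.dense_compl ℂ
  have hpath : Continuous fun z : ℂ => x + z • e := by fun_prop
  have hgood : (fun z : ℂ => x + z • e) '' (spectrum ℂ (-F x))ᶜ ⊆ {x | IsUnit (F x)} := by
    rintro _ ⟨z, hz, rfl⟩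
    rw [Set.mem_compl_iff, spectrum.mem_iff, not_not, Algebra.algebraMap_eq_smul_one,
      sub_neg_eq_add, add_comm] at hz
    simpa [hF] using hz
  simpa using closure_mono hgood (image_closure_subset_closure_image hpath ⟨0, hZ 0, rfl⟩)

variable (n) in
def genericConditions (N : ℕ) :
    Set (Set (Matrix n n ℂ × Matrix n n ℂ × Matrix n n ℂ × Matrix n n ℂ)) :=
  insert {p | IsUnit p.2.2.2}
    ((fun m => {p | IsUnit (windowMatrix m p.1 p.2.1 p.2.2.1 p.2.2.2)}) '' Set.Iic N)

lemma finite_genericConditions (N : ℕ) : (genericConditions n N).Finite :=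
  ((Set.finite_Iic N).image _).insert _

lemma isOpen_of_mem_genericConditions {N : ℕ} :
    ∀ s ∈ genericConditions n N, IsOpen s := by
  simp only [genericConditions, Set.forall_mem_insert, Set.forall_mem_image]
  exact ⟨isOpen_setOf_isUnit (by fun_prop), fun m _ => isOpen_setOf_isUnit
    (.windowMatrix m (by fun_prop) (by fun_prop) (by fun_prop) (by fun_prop))⟩

lemma dense_of_mem_genericConditions {N : ℕ} :
    ∀ s ∈ genericConditions n N, Dense s := by
  simp only [genericConditions, Set.forall_mem_insert, Set.forall_mem_image]
  exact ⟨dense_setOf_isUnit (0, 0, 0, 1) fun p z => by simp, fun m _ =>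
    dense_setOf_isUnit (0, 0, 0, 1) fun p z => by simp [windowMatrix_add_smul_one]⟩

lemma mem_sInter_genericConditions {N : ℕ} {cm c0 c1 α : Matrix n n ℂ} :
    (cm, c0, c1, α) ∈ ⋂₀ genericConditions n N
      ↔ IsUnit α ∧ ∀ m ≤ N, IsUnit (windowMatrix m cm c0 c1 α) := by
  simp [genericConditions]

end Generic

lemma exists_chi_comp_orbit_eq_windowWeight (t₀ t_f : ℝ) {ε : ℝ} (hε : 0 < ε) :
    ∃ N : ℕ, ∀ t, ∃ A : ℤ, ∃ m ≤ N, chi t₀ t_f ∘ orbit ε t ∘ (· + A) = windowWeight m := by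
  refine ⟨⌊(t_f - t₀) / ε⌋.toNat + 1, fun t => ?_⟩
  set A := ⌈(t₀ - t) / ε⌉
  set B := ⌊(t_f - t) / ε⌋
  refine ⟨A, (B - A + 1).toNat, ?_, funext fun j => ?_⟩
  · have hB := Int.floor_le ((t_f - t) / ε)
    have hA := Int.le_ceil ((t₀ - t) / ε)
    have : B - A ≤ ⌊(t_f - t₀) / ε⌋ := by
      rw [Int.le_floor, show (t_f - t₀) / ε = (t_f - t) / ε - (t₀ - t) / ε by ring]
      push_cast
      linarith
    omega
  · have hlow : t₀ ≤ orbit ε t (j + A) ↔ A ≤ j + A := by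
      rw [Int.ceil_le, div_le_iff₀ hε, orbit]
      push_cast
      constructor <;> intro <;> linarith
    have hhigh : orbit ε t (j + A) ≤ t_f ↔ j + A ≤ B := by
      rw [Int.le_floor, le_div_iff₀ hε, orbit]
      push_cast
      constructor <;> intro <;> linarith
    have hmem : orbit ε t (j + A) ∈ Set.Icc t₀ t_f ↔ j ∈ Set.Ico 0 ((B - A + 1).toNat : ℤ) := by
      rw [Set.mem_Icc, Set.mem_Ico, hlow, hhigh]
      omega
    simp only [Function.comp_apply, chi, windowWeight, Set.indicator_apply, hmem]

theorem stmt0_general (t₀ t_f ε : ℝ) (hε : 0 < ε) (d : ℕ) :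
    ∃ S : Set ((Matrix (Fin d) (Fin d) ℂ) × (Matrix (Fin d) (Fin d) ℂ) ×
        (Matrix (Fin d) (Fin d) ℂ) × (Matrix (Fin d) (Fin d) ℂ)),
      IsOpen S ∧ Dense S ∧
      ∀ cm c0 c1 α : Matrix (Fin d) (Fin d) ℂ, (cm, c0, c1, α) ∈ S →
        ∀ f : ℝ → Fin d → ℂ, ∃! u : ℝ → Fin d → ℂ, ∀ t : ℝ,
          α.mulVec (u t)
            + (chi t₀ t_f (t - ε) • cm.mulVec (u (t - ε))
              + chi t₀ t_f t • c0.mulVec (u t)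
              + chi t₀ t_f (t + ε) • c1.mulVec (u (t + ε))) = f t := by
  obtain ⟨N, hN⟩ := exists_chi_comp_orbit_eq_windowWeight t₀ t_f hε
  refine ⟨⋂₀ genericConditions (Fin d) N,
    (finite_genericConditions N).isOpen_sInter isOpen_of_mem_genericConditions,
    (finite_genericConditions N).dense_sInter isOpen_of_mem_genericConditions
      dense_of_mem_genericConditions,
    fun cm c0 c1 α hp f => ?_⟩
  obtain ⟨hα, hT⟩ := mem_sInter_genericConditions.1 hp
  have hbij : Bijective (convOp cm c0 c1 α (chi t₀ t_f) ε) :=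
    bijective_convOp_of_orbit fun t => by
      obtain ⟨A, m, hm, hχ⟩ := hN t
      refine bijective_convOp_of_equiv (Equiv.addRight A) (fun j => add_right_comm j 1 A) ?_
      rw [Equiv.coe_addRight]
      exact hχ ▸ bijective_convOp_windowWeight m hα (hT m hm)
  simpa only [funext_iff, convOp_apply] using (bijective_iff_existsUnique _).1 hbij f

/-- well-posedness of `α u + 𝒞 ⋆ (χ u) = f` for `N = 1`, for a generic
(open dense) set of quadruples `(c₋₁, c₀, c₁, α)`. -/
theorem stmt0 (t₀ t_f ε : ℝ) (ht : t₀ < t_f) (hε : 0 < ε) (hεle : ε ≤ t_f - t₀)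
    (d : ℕ) (hd : 1 ≤ d) :
    ∃ S : Set ((Matrix (Fin d) (Fin d) ℂ) × (Matrix (Fin d) (Fin d) ℂ) ×
        (Matrix (Fin d) (Fin d) ℂ) × (Matrix (Fin d) (Fin d) ℂ)),
      IsOpen S ∧ Dense S ∧
      ∀ cm c0 c1 α : Matrix (Fin d) (Fin d) ℂ, (cm, c0, c1, α) ∈ S →
        ∀ f : ℝ → Fin d → ℂ, ∃! u : ℝ → Fin d → ℂ, ∀ t : ℝ,
          α.mulVec (u t)
            + (chi t₀ t_f (t - ε) • cm.mulVec (u (t - ε))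
              + chi t₀ t_f t • c0.mulVec (u t)
              + chi t₀ t_f (t + ε) • c1.mulVec (u (t + ε))) = f t :=
  stmt0_general t₀ t_f ε hε d
end

section
/- Let t₀ < t_f be real numbers, let ε > 0 with ε ≤ t_f − t₀, and let d ≥ 1 be an integer. There exists an open dense subset T of (ℂ^{d×d})³ such that for every triple (c₋₁, c₀, c₁) ∈ T and every function g : ℝ → ℂ^d there exists a unique function f : ℝ → ℂ^d satisfying: f(t) = g(t) for all t ∈ [t₀, t_f], f(t) = 0 for all t ∉ [t₀−ε, t_f+ε], and there exists u : ℝ → ℂ^d with □u = f. Moreover, for this f, any two functions u, v : ℝ → ℂ^d with □u = f and □v = f coincide on [t₀, t_f]. -/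
open Matrix

/-- The operator `□` in the case `N = 1`:
`(□u)(t) = Σ_{k=−1}^{1} χ(t+kε) · (c_k ⬝ u(t+kε))`. -/
noncomputable def box1 {d : ℕ} (t₀ t_f ε : ℝ)
    (cm c0 c1 : Matrix (Fin d) (Fin d) ℂ) (u : ℝ → Fin d → ℂ) : ℝ → Fin d → ℂ :=
  fun t =>
    chi t₀ t_f (t - ε) • cm.mulVec (u (t - ε))
      + chi t₀ t_f t • c0.mulVec (u t)
      + chi t₀ t_f (t + ε) • c1.mulVec (u (t + ε))

/-!
For `t ∈ [t₀, t_f]`, `(□u)(t)` only involves the values of `u` at those of `t - ε, t, t + ε` that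
lie in `[t₀, t_f]`. Hence `[t₀, t_f]` splits into chains `s, s + ε, …, s + (n - 1)ε` with
`s ∈ [t₀, t₀ + ε)`, and on each chain the equation `□u = g` is a linear system whose matrix is
block tridiagonal, with blocks `c₋₁, c₀, c₁` on the sub-, main and superdiagonal. Chain lengths
are bounded by some `N`, so we take `T` to be the set of triples for which the block tridiagonal
matrices of all sizes `n ≤ N` are invertible. This is open by continuity of the determinant, and
dense because replacing `c₀` by `c₀ + z • 1` turns such a matrix `M` into `M + z • 1`, which is
singular only for the finitely many `z` in the spectrum of `-M`.
For triples in `T`, `□u` on `[t₀, t_f]` determines `u` there and takes every prescribed value;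
`f := □u` then vanishes outside `[t₀ - ε, t_f + ε]` automatically.
-/

open Kronecker Set Filter Topology

namespace Matrix

variable {R : Type*} [CommRing R] {d : ℕ}

def subdiagonal (n : ℕ) : Matrix (Fin n) (Fin n) R :=
  of fun j i => if (i : ℕ) + 1 = j then 1 else 0

def blockTridiag (n : ℕ) (a b c : Matrix (Fin d) (Fin d) R) :
    Matrix (Fin n × Fin d) (Fin n × Fin d) R :=
  subdiagonal n ⊗ₖ a + 1 ⊗ₖ b + (subdiagonal n)ᵀ ⊗ₖ c

theorem mul_subdiagonal_transpose_apply {m : Type*} {n : ℕ} (X : Matrix m (Fin n) R)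
    (p : m) (j : Fin n) :
    (X * (subdiagonal (R := R) n)ᵀ) p j = if h : 0 < (j : ℕ) then X p ⟨j - 1, by omega⟩ else 0 := by
  obtain ⟨_ | j, hj⟩ := j
  · simp [Matrix.mul_apply, subdiagonal]
  · simp only [Matrix.mul_apply, subdiagonal, transpose_apply, of_apply, mul_ite, mul_one, mul_zero,
      add_left_inj, dif_pos j.succ_pos]
    rw [Finset.sum_eq_single ⟨j, by omega⟩] <;> simp +contextual [Fin.ext_iff]

theorem mul_subdiagonal_apply {m : Type*} {n : ℕ} (X : Matrix m (Fin n) R) (p : m) (j : Fin n) :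
    (X * subdiagonal (R := R) n) p j = if h : (j : ℕ) + 1 < n then X p ⟨j + 1, h⟩ else 0 := by
  simp only [Matrix.mul_apply, subdiagonal, of_apply, mul_ite, mul_one, mul_zero]
  split_ifs with h
  · rw [Finset.sum_eq_single ⟨j + 1, h⟩] <;> simp +contextual [Fin.ext_iff, eq_comm]
  · refine Finset.sum_eq_zero fun i _ => if_neg ?_
    omega

theorem blockTridiag_mulVec_vec {n : ℕ} (a b c : Matrix (Fin d) (Fin d) R)
    (X : Matrix (Fin d) (Fin n) R) :
    blockTridiag n a b c *ᵥ vec X =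
      vec (a * X * (subdiagonal (R := R) n)ᵀ + b * X + c * X * subdiagonal (R := R) n) := by
  simp only [blockTridiag, add_mulVec, kronecker_mulVec_vec, transpose_one, Matrix.mul_one,
    transpose_transpose, vec_add]

theorem blockTridiag_add_smul_one (n : ℕ) (a b c : Matrix (Fin d) (Fin d) R) (z : R) :
    blockTridiag n a (b + z • 1) c = blockTridiag n a b c + z • 1 := by
  rw [blockTridiag, blockTridiag, kronecker_add, kronecker_smul, one_kronecker_one]
  abel

theorem Continuous.const_kronecker [TopologicalSpace R] [IsTopologicalRing R] {X : Type*}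
    [TopologicalSpace X] {m n : Type*} (S : Matrix m m R) {f : X → Matrix n n R}
    (hf : Continuous f) : Continuous fun x => S ⊗ₖ f x :=
  continuous_matrix fun i j => continuous_const.mul (hf.matrix_elem i.2 j.2)

theorem continuous_blockTridiag [TopologicalSpace R] [IsTopologicalRing R] (n : ℕ) :
    Continuous fun x : Matrix (Fin d) (Fin d) R × Matrix (Fin d) (Fin d) R ×
        Matrix (Fin d) (Fin d) R => blockTridiag n x.1 x.2.1 x.2.2 :=
  ((continuous_fst.const_kronecker _).add (continuous_snd.fst.const_kronecker _)).add
    (continuous_snd.snd.const_kronecker _)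

theorem finite_setOf_det_add_smul_one_eq_zero {K n : Type*} [Field K] [Fintype n] [DecidableEq n]
    (A : Matrix n n K) : {z : K | (A + z • 1).det = 0}.Finite := by
  refine (-A).finite_spectrum.subset fun z hz => ?_
  rw [spectrum.mem_iff, Algebra.algebraMap_eq_smul_one, sub_neg_eq_add, add_comm,
    isUnit_iff_isUnit_det, hz]
  exact not_isUnit_zero

end Matrix

section Nonsingular

variable {𝕜 : Type*} [NontriviallyNormedField 𝕜]

def nonsingularTriples (d N : ℕ) :
    Set (Matrix (Fin d) (Fin d) 𝕜 × Matrix (Fin d) (Fin d) 𝕜 × Matrix (Fin d) (Fin d) 𝕜) :=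
  {x | ∀ n ≤ N, (blockTridiag n x.1 x.2.1 x.2.2).det ≠ 0}

theorem isOpen_nonsingularTriples (d N : ℕ) : IsOpen (nonsingularTriples (𝕜 := 𝕜) d N) := by
  have : nonsingularTriples (𝕜 := 𝕜) d N =
      ⋂ n ∈ Iic N, {x | (blockTridiag n x.1 x.2.1 x.2.2).det ≠ 0} := by
    ext; simp [nonsingularTriples]
  rw [this]
  exact (finite_Iic N).isOpen_biInter fun n _ =>
    isOpen_ne_fun (continuous_blockTridiag n).matrix_det continuous_const

theorem dense_nonsingularTriples (d N : ℕ) : Dense (nonsingularTriples (𝕜 := 𝕜) d N) := by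
  rintro ⟨a, b, c⟩
  let line : 𝕜 → Matrix (Fin d) (Fin d) 𝕜 × Matrix (Fin d) (Fin d) 𝕜 × Matrix (Fin d) (Fin d) 𝕜 :=
    fun z => (a, b + z • 1, c)
  have hline : Tendsto line (𝓝[≠] 0) (𝓝 (a, b, c)) := by
    refine tendsto_nhdsWithin_of_tendsto_nhds ?_
    have : Continuous line := by fun_prop
    simpa [line] using this.tendsto 0
  have hsingular : (⋃ n ∈ Iic N, {z : 𝕜 | (blockTridiag n a b c + z • 1).det = 0}).Finite :=
    (finite_Iic N).biUnion fun n _ => finite_setOf_det_add_smul_one_eq_zero _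
  refine mem_closure_of_tendsto hline ?_
  filter_upwards [nhdsNE_le_cofinite (0 : 𝕜) hsingular.compl_mem_cofinite] with z hz n hn
  show (blockTridiag n a (b + z • 1) c).det ≠ 0
  rw [blockTridiag_add_smul_one]
  exact fun h => hz (mem_biUnion (mem_Iic.2 hn) h)

end Nonsingular

section Chains

variable {t₀ t_f ε : ℝ}

noncomputable def chainLen (t_f ε s : ℝ) : ℕ := ⌊(t_f - s) / ε⌋₊ + 1

noncomputable def chainIndex (t₀ ε t : ℝ) : ℕ := ⌊(t - t₀) / ε⌋₊

noncomputable def chainBase (t₀ ε t : ℝ) : ℝ := t - chainIndex t₀ ε t * ε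

theorem chainIndex_add_mul (hε : 0 < ε) {s : ℝ} (hs : s ∈ Ico t₀ (t₀ + ε)) (i : ℕ) :
    chainIndex t₀ ε (s + i * ε) = i := by
  have hfrac : (s - t₀) / ε < 1 := (div_lt_one hε).2 (by linarith [hs.2])
  rw [chainIndex, show (s + i * ε - t₀) / ε = (s - t₀) / ε + i by field_simp; ring,
    Nat.floor_add_natCast (div_nonneg (sub_nonneg.2 hs.1) hε.le), Nat.floor_eq_zero.2 hfrac,
    zero_add]

theorem chainBase_add_mul (hε : 0 < ε) {s : ℝ} (hs : s ∈ Ico t₀ (t₀ + ε)) (i : ℕ) :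
    chainBase t₀ ε (s + i * ε) = s := by
  rw [chainBase, chainIndex_add_mul hε hs]
  ring

theorem chainBase_mem_Ico (hε : 0 < ε) {t : ℝ} (ht : t₀ ≤ t) :
    chainBase t₀ ε t ∈ Ico t₀ (t₀ + ε) := by
  have hx : 0 ≤ (t - t₀) / ε := div_nonneg (sub_nonneg.2 ht) hε.le
  have hle := (le_div_iff₀ hε).1 (Nat.floor_le hx)
  have hlt := (div_lt_iff₀ hε).1 (Nat.lt_floor_add_one ((t - t₀) / ε))
  constructor <;> simp only [chainBase, chainIndex] <;> linarith

theorem add_mul_mem_Icc_iff (hε : 0 < ε) {s : ℝ} (hs : s ∈ Icc t₀ t_f) (i : ℕ) :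
    s + i * ε ∈ Icc t₀ t_f ↔ i < chainLen t_f ε s := by
  have hiε : 0 ≤ (i : ℝ) * ε := by positivity
  rw [chainLen, Nat.lt_add_one_iff, Nat.le_floor_iff (div_nonneg (sub_nonneg.2 hs.2) hε.le),
    le_div_iff₀ hε, mem_Icc]
  constructor
  · rintro ⟨-, h⟩
    linarith
  · intro h
    constructor <;> linarith [hs.1]

theorem chainLen_le (hε : 0 < ε) {s : ℝ} (hs : t₀ ≤ s) : chainLen t_f ε s ≤ chainLen t_f ε t₀ := by
  unfold chainLen
  gcongr

theorem exists_chainBase_add_mul_eq (hε : 0 < ε) {t : ℝ} (ht : t ∈ Icc t₀ t_f) :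
    ∃ s ∈ Icc t₀ t_f, s < t₀ + ε ∧ ∃ i < chainLen t_f ε s, s + i * ε = t := by
  obtain ⟨hs₀, hsε⟩ := chainBase_mem_Ico hε ht.1
  have hst : chainBase t₀ ε t ≤ t := sub_le_self _ (by positivity)
  have hs : chainBase t₀ ε t ∈ Icc t₀ t_f := ⟨hs₀, hst.trans ht.2⟩
  have hdecomp : chainBase t₀ ε t + chainIndex t₀ ε t * ε = t := sub_add_cancel _ _
  refine ⟨_, hs, hsε, chainIndex t₀ ε t, ?_, hdecomp⟩
  rw [← add_mul_mem_Icc_iff hε hs, hdecomp]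
  exact ht

variable {d : ℕ} {a b c : Matrix (Fin d) (Fin d) ℂ}

theorem box1_add_mul (hε : 0 < ε) (u : ℝ → Fin d → ℂ) {s : ℝ} (hs : s ∈ Icc t₀ t_f)
    (hsε : s < t₀ + ε) {j : ℕ} (hj : j < chainLen t_f ε s) :
    box1 t₀ t_f ε a b c u (s + j * ε) =
      (if 0 < j then a *ᵥ u (s + (j - 1 : ℕ) * ε) else 0) + b *ᵥ u (s + j * ε)
        + (if j + 1 < chainLen t_f ε s then c *ᵥ u (s + (j + 1 : ℕ) * ε) else 0) := by
  have hchi (i : ℕ) : chi t₀ t_f (s + i * ε) = if i < chainLen t_f ε s then 1 else 0 := by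
    simp only [chi, indicator_apply, add_mul_mem_Icc_iff hε hs]
  have hprev : chi t₀ t_f (s + j * ε - ε) • a *ᵥ u (s + j * ε - ε) =
      if 0 < j then a *ᵥ u (s + (j - 1 : ℕ) * ε) else 0 := by
    rcases j with _ | j
    · have : s - ε ∉ Icc t₀ t_f := fun h => by linarith [h.1]
      simp [chi, indicator_of_notMem this]
    · rw [show s + (j + 1 : ℕ) * ε - ε = s + j * ε by push_cast; ring, hchi,
        if_pos (by omega)]
      simp
  have hnext : s + j * ε + ε = s + (j + 1 : ℕ) * ε := by push_cast; ring
  simp only [box1]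
  rw [hprev, hnext, hchi, hchi, if_pos hj, one_smul]
  split_ifs <;> simp

theorem box1_congr {u v : ℝ → Fin d → ℂ} (h : EqOn u v (Icc t₀ t_f)) :
    box1 t₀ t_f ε a b c u = box1 t₀ t_f ε a b c v := by
  have hterm (m : Matrix (Fin d) (Fin d) ℂ) (x : ℝ) :
      chi t₀ t_f x • m *ᵥ u x = chi t₀ t_f x • m *ᵥ v x := by
    by_cases hx : x ∈ Icc t₀ t_f
    · rw [h hx]
    · simp [chi, indicator_of_notMem hx]
  funext t
  simp only [box1, hterm]

theorem box1_eq_zero_of_notMem (hε : 0 ≤ ε) (u : ℝ → Fin d → ℂ) {t : ℝ}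
    (ht : t ∉ Icc (t₀ - ε) (t_f + ε)) : box1 t₀ t_f ε a b c u t = 0 := by
  rw [mem_Icc, not_and_or, not_le, not_le] at ht
  have hout (x : ℝ) (hx₁ : t - ε ≤ x) (hx₂ : x ≤ t + ε) : x ∉ Icc t₀ t_f := fun hx => by
    rcases ht with ht | ht <;> linarith [hx.1, hx.2]
  simp only [box1, chi, indicator_of_notMem (hout (t - ε) le_rfl (by linarith)),
    indicator_of_notMem (hout t (by linarith) (by linarith)),
    indicator_of_notMem (hout (t + ε) (by linarith) le_rfl), zero_smul, add_zero]

def chainMatrix (ε : ℝ) (u : ℝ → Fin d → ℂ) (s : ℝ) (n : ℕ) : Matrix (Fin d) (Fin n) ℂ :=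
  of fun p i => u (s + i * ε) p

theorem vec_chainMatrix_box1 (hε : 0 < ε) (u : ℝ → Fin d → ℂ) {s : ℝ} (hs : s ∈ Icc t₀ t_f)
    (hsε : s < t₀ + ε) :
    vec (chainMatrix ε (box1 t₀ t_f ε a b c u) s (chainLen t_f ε s)) =
      blockTridiag (chainLen t_f ε s) a b c *ᵥ vec (chainMatrix ε u s (chainLen t_f ε s)) := by
  rw [blockTridiag_mulVec_vec]
  congr 1
  ext p j
  rw [chainMatrix, of_apply, box1_add_mul hε u hs hsε j.isLt]
  simp only [Matrix.add_apply, Matrix.mul_assoc]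
  rw [Matrix.mul_apply, Matrix.mul_apply, Matrix.mul_apply]
  simp only [mul_subdiagonal_transpose_apply, mul_subdiagonal_apply]
  split_ifs <;> simp [mulVec, dotProduct, chainMatrix]

theorem eqOn_of_box1_eqOn (hε : 0 < ε) (habc : (a, b, c) ∈ nonsingularTriples d (chainLen t_f ε t₀))
    {u v : ℝ → Fin d → ℂ} (h : EqOn (box1 t₀ t_f ε a b c u) (box1 t₀ t_f ε a b c v) (Icc t₀ t_f)) :
    EqOn u v (Icc t₀ t_f) := by
  intro t ht
  obtain ⟨s, hs, hsε, i, hi, rfl⟩ := exists_chainBase_add_mul_eq hε ht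
  have hunit : IsUnit (blockTridiag (chainLen t_f ε s) a b c) :=
    (isUnit_iff_isUnit_det _).2 (isUnit_iff_ne_zero.2 (habc _ (chainLen_le hε hs.1)))
  have hchain : chainMatrix ε u s (chainLen t_f ε s) = chainMatrix ε v s (chainLen t_f ε s) := by
    refine vec_inj.1 (mulVec_injective_iff_isUnit.2 hunit ?_)
    rw [← vec_chainMatrix_box1 hε u hs hsε, ← vec_chainMatrix_box1 hε v hs hsε]
    congr 1
    ext p j
    exact congrFun (h ((add_mul_mem_Icc_iff hε hs j).2 j.isLt)) p
  funext p
  exact congrFun₂ hchain p ⟨i, hi⟩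

theorem exists_box1_eqOn (hε : 0 < ε) (habc : (a, b, c) ∈ nonsingularTriples d (chainLen t_f ε t₀))
    (g : ℝ → Fin d → ℂ) : ∃ u, EqOn (box1 t₀ t_f ε a b c u) g (Icc t₀ t_f) := by
  let sol (s : ℝ) : Fin (chainLen t_f ε s) × Fin d → ℂ :=
    (blockTridiag (chainLen t_f ε s) a b c)⁻¹ *ᵥ vec (chainMatrix ε g s (chainLen t_f ε s))
  -- indexed by `ℕ` rather than `Fin (chainLen t_f ε s)`, so that rewriting the base point `s`
  -- below is not a dependent rewrite
  let solAt (s : ℝ) (i : ℕ) (p : Fin d) : ℂ :=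
    if h : i < chainLen t_f ε s then sol s (⟨i, h⟩, p) else 0
  let u (t : ℝ) : Fin d → ℂ := solAt (chainBase t₀ ε t) (chainIndex t₀ ε t)
  refine ⟨u, fun t ht => ?_⟩
  obtain ⟨s, hs, hsε, i, hi, rfl⟩ := exists_chainBase_add_mul_eq hε ht
  have hchain : vec (chainMatrix ε u s (chainLen t_f ε s)) = sol s := by
    ext ⟨j, p⟩
    simp only [vec, chainMatrix, of_apply, u, chainBase_add_mul hε ⟨hs.1, hsε⟩,
      chainIndex_add_mul hε ⟨hs.1, hsε⟩]
    exact dif_pos j.isLt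
  have hsys := vec_chainMatrix_box1 (a := a) (b := b) (c := c) hε u hs hsε
  rw [hchain, mulVec_mulVec,
    mul_nonsing_inv _ (isUnit_iff_ne_zero.2 (habc _ (chainLen_le hε hs.1))), one_mulVec] at hsys
  funext p
  exact congrFun hsys (⟨i, hi⟩, p)

end Chains

theorem stmt1_general (t₀ t_f ε : ℝ) (hε : 0 < ε) (d : ℕ) :
    ∃ T : Set ((Matrix (Fin d) (Fin d) ℂ) × (Matrix (Fin d) (Fin d) ℂ) ×
        (Matrix (Fin d) (Fin d) ℂ)),
      IsOpen T ∧ Dense T ∧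
      ∀ cm c0 c1 : Matrix (Fin d) (Fin d) ℂ, (cm, c0, c1) ∈ T →
        ∀ g : ℝ → Fin d → ℂ,
          (∃! f : ℝ → Fin d → ℂ,
            (∀ t ∈ Set.Icc t₀ t_f, f t = g t) ∧
            (∀ t ∉ Set.Icc (t₀ - ε) (t_f + ε), f t = 0) ∧
            (∃ u : ℝ → Fin d → ℂ, box1 t₀ t_f ε cm c0 c1 u = f)) ∧
          (∀ f : ℝ → Fin d → ℂ,
            ((∀ t ∈ Set.Icc t₀ t_f, f t = g t) ∧
             (∀ t ∉ Set.Icc (t₀ - ε) (t_f + ε), f t = 0) ∧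
             (∃ u : ℝ → Fin d → ℂ, box1 t₀ t_f ε cm c0 c1 u = f)) →
            ∀ u v : ℝ → Fin d → ℂ,
              box1 t₀ t_f ε cm c0 c1 u = f → box1 t₀ t_f ε cm c0 c1 v = f →
              ∀ t ∈ Set.Icc t₀ t_f, u t = v t) := by
  refine ⟨nonsingularTriples d (chainLen t_f ε t₀), isOpen_nonsingularTriples _ _,
    dense_nonsingularTriples _ _, fun a b c habc g => ?_⟩
  obtain ⟨u₀, hu₀⟩ := exists_box1_eqOn hε habc g
  refine ⟨⟨box1 t₀ t_f ε a b c u₀,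
    ⟨hu₀, fun t => box1_eq_zero_of_notMem hε.le u₀, u₀, rfl⟩, ?_⟩, ?_⟩
  · rintro f ⟨hfg, -, u, rfl⟩
    exact box1_congr (eqOn_of_box1_eqOn hε habc (EqOn.trans hfg hu₀.symm))
  · rintro f - u v rfl hv
    exact eqOn_of_box1_eqOn hε habc fun t _ => (congrFun hv t).symm

/-- characterization of the range of `□` for `N = 1`, for a generic
(open dense) set of triples `(c₋₁, c₀, c₁)`. -/
theorem stmt1 (t₀ t_f ε : ℝ) (ht : t₀ < t_f) (hε : 0 < ε) (hεle : ε ≤ t_f - t₀)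
    (d : ℕ) (hd : 1 ≤ d) :
    ∃ T : Set ((Matrix (Fin d) (Fin d) ℂ) × (Matrix (Fin d) (Fin d) ℂ) ×
        (Matrix (Fin d) (Fin d) ℂ)),
      IsOpen T ∧ Dense T ∧
      ∀ cm c0 c1 : Matrix (Fin d) (Fin d) ℂ, (cm, c0, c1) ∈ T →
        ∀ g : ℝ → Fin d → ℂ,
          (∃! f : ℝ → Fin d → ℂ,
            (∀ t ∈ Set.Icc t₀ t_f, f t = g t) ∧
            (∀ t ∉ Set.Icc (t₀ - ε) (t_f + ε), f t = 0) ∧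
            (∃ u : ℝ → Fin d → ℂ, box1 t₀ t_f ε cm c0 c1 u = f)) ∧
          (∀ f : ℝ → Fin d → ℂ,
            ((∀ t ∈ Set.Icc t₀ t_f, f t = g t) ∧
             (∀ t ∉ Set.Icc (t₀ - ε) (t_f + ε), f t = 0) ∧
             (∃ u : ℝ → Fin d → ℂ, box1 t₀ t_f ε cm c0 c1 u = f)) →
            ∀ u v : ℝ → Fin d → ℂ,
              box1 t₀ t_f ε cm c0 c1 u = f → box1 t₀ t_f ε cm c0 c1 v = f →
              ∀ t ∈ Set.Icc t₀ t_f, u t = v t) :=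
  stmt1_general t₀ t_f ε hε d
end

section
/- Assume that c_N is invertible or c_{−N} is invertible. Then for every function u : ℝ → ℂ^d, □u is identically zero on ℝ if and only if u(t) = 0 for all t ∈ [t₀, t_f]. Consequently, for all u, v : ℝ → ℂ^d, □u = □v if and only if u and v coincide on [t₀, t_f]. -/
open Matrix

/-- The operator `□`: `(□u)(t) = Σ_{k=−N}^{N} χ(t+kε) · (c_k ⬝ u(t+kε))`. -/
noncomputable def box {d : ℕ} (t₀ t_f ε : ℝ) (N : ℕ)
    (c : ℤ → Matrix (Fin d) (Fin d) ℂ) (u : ℝ → Fin d → ℂ) : ℝ → Fin d → ℂ :=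
  fun t => ∑ k ∈ Finset.Icc (-(N : ℤ)) (N : ℤ),
    chi t₀ t_f (t + (k : ℝ) * ε) • (c k).mulVec (u (t + (k : ℝ) * ε))

lemma chi_of_mem {t₀ t_f x : ℝ} (h : x ∈ Set.Icc t₀ t_f) : chi t₀ t_f x = 1 :=
  Set.indicator_of_mem h _

lemma chi_of_not_mem {t₀ t_f x : ℝ} (h : x ∉ Set.Icc t₀ t_f) : chi t₀ t_f x = 0 :=
  Set.indicator_of_notMem h _

/-- forward direction when c_N is a unit -/
lemma aux_fwd (t₀ t_f ε : ℝ) (hε : 0 < ε) (d N : ℕ)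
    (c : ℤ → Matrix (Fin d) (Fin d) ℂ) (hc : IsUnit (c (N : ℤ)))
    (u : ℝ → Fin d → ℂ) (hu : box t₀ t_f ε N c u = 0) :
    ∀ t ∈ Set.Icc t₀ t_f, u t = 0 := by
  have hinj : Function.Injective ((c (N : ℤ)).mulVec) :=
    Matrix.mulVec_injective_iff_isUnit.mpr hc
  have main : ∀ t ∈ Set.Icc t₀ t_f,
      (∀ s ∈ Set.Icc t₀ t_f, s ≤ t - ε → u s = 0) → u t = 0 := by
    intro t htI hprev
    have h0 : box t₀ t_f ε N c u (t - N * ε) = 0 := by rw [hu]; rfl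
    unfold box at h0
    rw [Finset.sum_eq_single_of_mem (N : ℤ)
      (by simp)
      (by
        intro k hk hne
        have hk' : k < (N : ℤ) := lt_of_le_of_ne (Finset.mem_Icc.mp hk).2 hne
        have hkR : (k : ℝ) ≤ (N : ℝ) - 1 := by
          have : (k : ℤ) ≤ (N : ℤ) - 1 := by omega
          exact_mod_cast this
        set p := t - N * ε + (k : ℝ) * ε with hp
        have hple : p ≤ t - ε := by nlinarith
        by_cases hpI : p ∈ Set.Icc t₀ t_f
        · rw [hprev p hpI hple]
          simp [Matrix.mulVec_zero]
        · rw [chi_of_not_mem hpI, zero_smul])] at h0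
    have heq : t - N * ε + ((N : ℤ) : ℝ) * ε = t := by push_cast; ring
    rw [heq, chi_of_mem htI, one_smul] at h0
    have := hinj (a₁ := u t) (a₂ := 0) (by rw [h0, Matrix.mulVec_zero])
    exact this
  -- induction
  have key : ∀ n : ℕ, ∀ t ∈ Set.Icc t₀ t_f, t ≤ t₀ + n * ε → u t = 0 := by
    intro n
    induction n with
    | zero =>
      intro t htI hle
      refine main t htI ?_
      intro s hsI hs
      exfalso
      have := hsI.1
      simp only [Nat.cast_zero, zero_mul, add_zero] at hle
      linarith
    | succ n ih =>
      intro t htI hle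
      refine main t htI ?_
      intro s hsI hs
      refine ih s hsI ?_
      push_cast at hle ⊢
      linarith
  intro t htI
  obtain ⟨n, hn⟩ := exists_nat_ge ((t - t₀) / ε)
  refine key n t htI ?_
  have := (div_le_iff₀ hε).mp hn
  linarith

/-- forward direction when c_{-N} is a unit -/
lemma aux_bwd (t₀ t_f ε : ℝ) (hε : 0 < ε) (d N : ℕ)
    (c : ℤ → Matrix (Fin d) (Fin d) ℂ) (hc : IsUnit (c (-(N : ℤ))))
    (u : ℝ → Fin d → ℂ) (hu : box t₀ t_f ε N c u = 0) :
    ∀ t ∈ Set.Icc t₀ t_f, u t = 0 := by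
  have hinj : Function.Injective ((c (-(N : ℤ))).mulVec) :=
    Matrix.mulVec_injective_iff_isUnit.mpr hc
  have main : ∀ t ∈ Set.Icc t₀ t_f,
      (∀ s ∈ Set.Icc t₀ t_f, t + ε ≤ s → u s = 0) → u t = 0 := by
    intro t htI hprev
    have h0 : box t₀ t_f ε N c u (t + N * ε) = 0 := by rw [hu]; rfl
    unfold box at h0
    rw [Finset.sum_eq_single_of_mem (-(N : ℤ))
      (by simp)
      (by
        intro k hk hne
        have hk' : -(N : ℤ) < k := lt_of_le_of_ne (Finset.mem_Icc.mp hk).1 (Ne.symm hne)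
        have hkR : (-(N : ℝ)) + 1 ≤ (k : ℝ) := by
          have : -(N : ℤ) + 1 ≤ k := by omega
          exact_mod_cast this
        set p := t + N * ε + (k : ℝ) * ε with hp
        have hple : t + ε ≤ p := by nlinarith
        by_cases hpI : p ∈ Set.Icc t₀ t_f
        · rw [hprev p hpI hple]
          simp [Matrix.mulVec_zero]
        · rw [chi_of_not_mem hpI, zero_smul])] at h0
    push_cast at h0
    rw [show t + (N:ℝ) * ε + -(N:ℝ) * ε = t from by ring, chi_of_mem htI, one_smul] at h0
    exact hinj (a₁ := u t) (a₂ := 0) (by rw [h0, Matrix.mulVec_zero])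
  have key : ∀ n : ℕ, ∀ t ∈ Set.Icc t₀ t_f, t_f - n * ε ≤ t → u t = 0 := by
    intro n
    induction n with
    | zero =>
      intro t htI hle
      refine main t htI ?_
      intro s hsI hs
      exfalso
      have := hsI.2
      simp only [Nat.cast_zero, zero_mul, sub_zero] at hle
      linarith
    | succ n ih =>
      intro t htI hle
      refine main t htI ?_
      intro s hsI hs
      refine ih s hsI ?_
      push_cast at hle ⊢
      linarith
  intro t htI
  obtain ⟨n, hn⟩ := exists_nat_ge ((t_f - t) / ε)
  refine key n t htI ?_
  have := (div_le_iff₀ hε).mp hn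
  linarith

lemma box_of_zero (t₀ t_f ε : ℝ) (d N : ℕ)
    (c : ℤ → Matrix (Fin d) (Fin d) ℂ) (u : ℝ → Fin d → ℂ)
    (h : ∀ t ∈ Set.Icc t₀ t_f, u t = 0) :
    box t₀ t_f ε N c u = 0 := by
  funext t
  unfold box
  refine Finset.sum_eq_zero ?_
  intro k _
  by_cases hI : t + (k : ℝ) * ε ∈ Set.Icc t₀ t_f
  · rw [h _ hI]; simp [Matrix.mulVec_zero]
  · rw [chi_of_not_mem hI, zero_smul]

lemma box_sub (t₀ t_f ε : ℝ) (d N : ℕ)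
    (c : ℤ → Matrix (Fin d) (Fin d) ℂ) (u v : ℝ → Fin d → ℂ) :
    box t₀ t_f ε N c (u - v) = box t₀ t_f ε N c u - box t₀ t_f ε N c v := by
  funext t
  simp only [box, Pi.sub_apply, Matrix.mulVec_sub, smul_sub, Finset.sum_sub_distrib]

/-- if `c_N` or `c_{−N}` is invertible, then `□u ≡ 0` iff `u` vanishes on
`[t₀, t_f]`; consequently `□u = □v` iff `u` and `v` coincide on `[t₀, t_f]`. -/
theorem stmt6 (t₀ t_f ε : ℝ) (ht : t₀ < t_f) (hε : 0 < ε)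
    (d N : ℕ) (hd : 1 ≤ d) (hN : 1 ≤ N)
    (c : ℤ → Matrix (Fin d) (Fin d) ℂ)
    (hinv : IsUnit (c (N : ℤ)) ∨ IsUnit (c (-(N : ℤ)))) :
    (∀ u : ℝ → Fin d → ℂ,
      box t₀ t_f ε N c u = 0 ↔ ∀ t ∈ Set.Icc t₀ t_f, u t = 0) ∧
    (∀ u v : ℝ → Fin d → ℂ,
      box t₀ t_f ε N c u = box t₀ t_f ε N c v ↔ ∀ t ∈ Set.Icc t₀ t_f, u t = v t) := by
  have fwd : ∀ u : ℝ → Fin d → ℂ,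
      box t₀ t_f ε N c u = 0 ↔ ∀ t ∈ Set.Icc t₀ t_f, u t = 0 := by
    intro u
    constructor
    · intro hu
      rcases hinv with hc | hc
      · exact aux_fwd t₀ t_f ε hε d N c hc u hu
      · exact aux_bwd t₀ t_f ε hε d N c hc u hu
    · exact box_of_zero t₀ t_f ε d N c u
  refine ⟨fwd, ?_⟩
  intro u v
  have h := fwd (u - v)
  rw [box_sub, sub_eq_zero] at h
  rw [h]
  constructor
  · intro h' t htI
    have := h' t htI
    simpa [sub_eq_zero] using this
  · intro h' t htI
    simp [Pi.sub_apply, h' t htI]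
end

section
/- Assume that c_N is invertible or c_{−N} is invertible. Then for every function u : ℝ → ℂ^d, the function □u is Borel-measurable on ℝ if and only if the restriction of u to [t₀, t_f] is Borel-measurable. -/
/-!
Write `w` for the indicator of `u` on `[t₀, t_f]`, so that `□u(t) = Σ_k c_k w(t + kε)`; hence
`□u` is measurable when `w` is. Conversely, if `c_N` is invertible then
`w(s) = c_N⁻¹ (□u(s - Nε) - Σ_{k<N} c_k w(s - (N - k)ε))` determines `w` on `(-∞, x + ε)` from
`□u` and `w` on `(-∞, x)`. As `w` vanishes left of `t₀`, measurability propagates one strip of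
width `ε` at a time across `[t₀, t_f]`. The case of invertible `c_{-N}` is the reflection `t ↦ -t`
of this one.
-/

open Matrix

open Set
open scoped Pointwise

lemma measurable_domRestrict_iff_measurable_indicator {α β : Type*} [MeasurableSpace α]
    [MeasurableSpace β] [Zero β] {s : Set α} (hs : MeasurableSet s) {f : α → β} :
    Measurable (s.domRestrict f) ↔ Measurable (s.indicator f) := by
  classical
  refine ⟨fun h => ?_, fun h => ?_⟩
  · convert h.dite (measurable_const (a := (0 : β))) hs using 1
    funext x
    simp [indicator_apply]
  · convert h.comp measurable_subtype_coe using 1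
    funext x
    simp

lemma measurable_of_measurable_indicator_Iio_step {E : Type*} [Zero E] [MeasurableSpace E]
    {f : ℝ → E} {a b ε : ℝ} (hε : 0 < ε) (hf : Function.support f ⊆ Icc a b)
    (hstep : ∀ x, Measurable ((Iio x).indicator f) → Measurable ((Iio (x + ε)).indicator f)) :
    Measurable f := by
  have hbase : (Iio a).indicator f = fun _ => 0 :=
    indicator_eq_zero.2 <| disjoint_left.2 fun x hx hlt => not_le.2 hlt (hf hx).1
  have hmeas : ∀ n : ℕ, Measurable ((Iio (a + n * ε)).indicator f) := by
    intro n
    induction n with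
    | zero => simp [hbase]
    | succ n ih => simpa [add_mul, add_assoc] using hstep _ ih
  obtain ⟨n, hn⟩ := exists_nat_gt ((b - a) / ε)
  have hcover : Function.support f ⊆ Iio (a + n * ε) := by
    refine hf.trans fun x hx => ?_
    rw [div_lt_iff₀ hε] at hn
    exact mem_Iio.2 (by linarith [hx.2])
  simpa [indicator_eq_self.2 hcover] using hmeas n

lemma Matrix.measurable_mulVec {m n R : Type*} [Fintype m] [Fintype n] [Semiring R]
    [TopologicalSpace R] [IsTopologicalSemiring R] [SecondCountableTopology R] [MeasurableSpace R]
    [BorelSpace R] (A : Matrix m n R) : Measurable (A *ᵥ ·) :=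
  (continuous_const.matrix_mulVec continuous_id).measurable

lemma indicator_Icc_neg_comp_neg {E : Type*} [Zero E] (a b : ℝ) (f : ℝ → E) (x : ℝ) :
    (Icc (-b) (-a)).indicator (fun t => f (-t)) x = (Icc a b).indicator f (-x) := by
  rw [← neg_Icc]
  exact indicator_comp_right (s := Icc a b) Neg.neg

section Box

variable {d : ℕ} (t₀ t_f ε : ℝ) (N : ℕ) (c : ℤ → Matrix (Fin d) (Fin d) ℂ) (u : ℝ → Fin d → ℂ)

lemma box_apply_eq_sum_mulVec_indicator (t : ℝ) :
    box t₀ t_f ε N c u t =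
      ∑ k ∈ Finset.Icc (-(N : ℤ)) N, c k *ᵥ (Icc t₀ t_f).indicator u (t + k * ε) := by
  refine Finset.sum_congr rfl fun k _ => ?_
  by_cases h : t + k * ε ∈ Icc t₀ t_f <;> simp [chi, h]

lemma measurable_box_of_measurable_indicator (hu : Measurable ((Icc t₀ t_f).indicator u)) :
    Measurable (box t₀ t_f ε N c u) := by
  rw [funext (box_apply_eq_sum_mulVec_indicator t₀ t_f ε N c u)]
  exact Finset.measurable_sum _ fun k _ =>
    (c k).measurable_mulVec.comp (hu.comp (measurable_add_const _))

lemma box_sub_apply_eq (s : ℝ) :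
    box t₀ t_f ε N c u (s - N * ε) = c N *ᵥ (Icc t₀ t_f).indicator u s +
      ∑ k ∈ Finset.Ico (-(N : ℤ)) N, c k *ᵥ (Icc t₀ t_f).indicator u (s - N * ε + k * ε) := by
  rw [box_apply_eq_sum_mulVec_indicator, ← Finset.Ico_insert_right (by omega),
    Finset.sum_insert Finset.right_notMem_Ico]
  simp

lemma box_reflect_apply (t : ℝ) :
    box (-t_f) (-t₀) ε N (fun k => c (-k)) (fun t => u (-t)) t = box t₀ t_f ε N c u (-t) := by
  have hsymm : -Finset.Icc (-(N : ℤ)) N = Finset.Icc (-(N : ℤ)) N := by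
    ext k
    simp only [Finset.mem_neg', Finset.mem_Icc]
    omega
  simp only [box_apply_eq_sum_mulVec_indicator, indicator_Icc_neg_comp_neg]
  rw [← hsymm, Finset.sum_neg_index, hsymm]
  simp [add_comm]

variable {t₀ t_f ε N c u}

lemma measurable_indicator_Iio_add_of_isUnit (hε : 0 < ε) (hc : IsUnit (c N))
    (hbox : Measurable (box t₀ t_f ε N c u)) {x : ℝ}
    (hx : Measurable ((Iio x).indicator ((Icc t₀ t_f).indicator u))) :
    Measurable ((Iio (x + ε)).indicator ((Icc t₀ t_f).indicator u)) := by
  let g : ℝ → Fin d → ℂ := fun s => (c N)⁻¹ *ᵥ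
    (box t₀ t_f ε N c u (s - N * ε) - ∑ k ∈ Finset.Ico (-(N : ℤ)) N,
      c k *ᵥ (Iio x).indicator ((Icc t₀ t_f).indicator u) (s - N * ε + k * ε))
  have hg : Measurable g := by
    refine (Matrix.measurable_mulVec _).comp (.sub (hbox.comp (measurable_sub_const _)) ?_)
    exact Finset.measurable_sum _ fun k _ => (c k).measurable_mulVec.comp
      (hx.comp ((measurable_sub_const _).add_const _))
  suffices (Iio (x + ε)).indicator ((Icc t₀ t_f).indicator u) = (Iio (x + ε)).indicator g from
    this ▸ hg.indicator measurableSet_Iio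
  refine indicator_congr fun s hs => ?_
  -- every earlier sample `s - (N - k) ε` with `k < N` lies left of `x`
  have hpast : ∀ k ∈ Finset.Ico (-(N : ℤ)) N,
      c k *ᵥ (Iio x).indicator ((Icc t₀ t_f).indicator u) (s - N * ε + k * ε) =
        c k *ᵥ (Icc t₀ t_f).indicator u (s - N * ε + k * ε) := by
    intro k hk
    have hkN : (k : ℝ) + 1 ≤ N := by exact_mod_cast (Finset.mem_Ico.1 hk).2
    rw [indicator_of_mem (mem_Iio.2 (by nlinarith [mem_Iio.1 hs]))]
  simp only [g]
  rw [box_sub_apply_eq, Finset.sum_congr rfl hpast, add_sub_cancel_right, Matrix.mulVec_mulVec,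
    Matrix.nonsing_inv_mul _ ((Matrix.isUnit_iff_isUnit_det _).1 hc), Matrix.one_mulVec]

lemma measurable_indicator_of_isUnit_last (hε : 0 < ε) (hc : IsUnit (c N))
    (hbox : Measurable (box t₀ t_f ε N c u)) : Measurable ((Icc t₀ t_f).indicator u) :=
  measurable_of_measurable_indicator_Iio_step hε support_indicator_subset
    fun _ => measurable_indicator_Iio_add_of_isUnit hε hc hbox

lemma measurable_indicator_of_isUnit_first (hε : 0 < ε) (hc : IsUnit (c (-N)))
    (hbox : Measurable (box t₀ t_f ε N c u)) : Measurable ((Icc t₀ t_f).indicator u) := by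
  have hreflect : Measurable (box (-t_f) (-t₀) ε N (fun k => c (-k)) (fun t => u (-t))) := by
    rw [funext (box_reflect_apply t₀ t_f ε N c u)]
    exact hbox.comp measurable_neg
  have hu := (measurable_indicator_of_isUnit_last hε hc hreflect).comp measurable_neg
  simpa only [Function.comp_def, indicator_Icc_neg_comp_neg, neg_neg] using hu

lemma measurable_box_iff_measurable_indicator (hε : 0 < ε)
    (hinv : IsUnit (c N) ∨ IsUnit (c (-N))) :
    Measurable (box t₀ t_f ε N c u) ↔ Measurable ((Icc t₀ t_f).indicator u) := by
  refine ⟨fun hbox => ?_, measurable_box_of_measurable_indicator t₀ t_f ε N c u⟩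
  rcases hinv with hc | hc
  · exact measurable_indicator_of_isUnit_last hε hc hbox
  · exact measurable_indicator_of_isUnit_first hε hc hbox

end Box

theorem stmt7_general (t₀ t_f ε : ℝ) (hε : 0 < ε)
    (d N : ℕ)
    (c : ℤ → Matrix (Fin d) (Fin d) ℂ)
    (hinv : IsUnit (c (N : ℤ)) ∨ IsUnit (c (-(N : ℤ))))
    (u : ℝ → Fin d → ℂ) :
    Measurable (box t₀ t_f ε N c u) ↔ Measurable ((Set.Icc t₀ t_f).restrict u) :=
  (measurable_box_iff_measurable_indicator hε hinv).trans
    (measurable_domRestrict_iff_measurable_indicator measurableSet_Icc).symm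

/-- if `c_N` or `c_{−N}` is invertible, then `□u` is Borel-measurable on `ℝ`
iff the restriction of `u` to `[t₀, t_f]` is Borel-measurable. -/
theorem stmt7 (t₀ t_f ε : ℝ) (ht : t₀ < t_f) (hε : 0 < ε)
    (d N : ℕ) (hd : 1 ≤ d) (hN : 1 ≤ N)
    (c : ℤ → Matrix (Fin d) (Fin d) ℂ)
    (hinv : IsUnit (c (N : ℤ)) ∨ IsUnit (c (-(N : ℤ))))
    (u : ℝ → Fin d → ℂ) :
    Measurable (box t₀ t_f ε N c u) ↔ Measurable ((Set.Icc t₀ t_f).restrict u) :=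
  stmt7_general t₀ t_f ε hε d N c hinv u
end

section
/- Assume that c_N is invertible or c_{−N} is invertible. Then for every function u : ℝ → ℂ^d, the function □u is (Lebesgue–Bochner) integrable on ℝ if and only if u is integrable on [t₀, t_f]. -/
open Matrix

open MeasureTheory

section Aux

variable {d : ℕ}

lemma integrable_mulVec {μ : Measure ℝ} (M : Matrix (Fin d) (Fin d) ℂ)
    {f : ℝ → Fin d → ℂ} (hf : Integrable f μ) :
    Integrable (fun t => M.mulVec (f t)) μ := by
  have := (LinearMap.toContinuousLinearMap (Matrix.mulVecLin M)).integrable_comp hf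
  simpa using this

lemma chi_smul_mulVec (t₀ t_f s : ℝ) (M : Matrix (Fin d) (Fin d) ℂ) (u : ℝ → Fin d → ℂ) :
    chi t₀ t_f s • M.mulVec (u s) = M.mulVec ((Set.Icc t₀ t_f).indicator u s) := by
  by_cases h : s ∈ Set.Icc t₀ t_f
  · simp [chi, Set.indicator_of_mem h]
  · simp [chi, Set.indicator_of_notMem h, Matrix.mulVec_zero]

lemma box_apply_eq (t₀ t_f ε : ℝ) (N : ℕ) (c : ℤ → Matrix (Fin d) (Fin d) ℂ)
    (u : ℝ → Fin d → ℂ) (t : ℝ) :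
    box t₀ t_f ε N c u t = ∑ k ∈ Finset.Icc (-(N : ℤ)) (N : ℤ),
      (c k).mulVec ((Set.Icc t₀ t_f).indicator u (t + (k : ℝ) * ε)) :=
  Finset.sum_congr rfl fun k _ => chi_smul_mulVec t₀ t_f _ (c k) u

/-- The easy direction: integrability of `u` on `[t₀, t_f]` gives integrability of `□u`. -/
lemma box_integrable (t₀ t_f ε : ℝ) (N : ℕ) (c : ℤ → Matrix (Fin d) (Fin d) ℂ)
    (u : ℝ → Fin d → ℂ) (hu : IntegrableOn u (Set.Icc t₀ t_f) volume) :
    Integrable (box t₀ t_f ε N c u) volume := by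
  have hgint : Integrable ((Set.Icc t₀ t_f).indicator u) volume :=
    (integrable_indicator_iff measurableSet_Icc).mpr hu
  have hb : box t₀ t_f ε N c u = fun t => ∑ k ∈ Finset.Icc (-(N : ℤ)) (N : ℤ),
      (c k).mulVec ((Set.Icc t₀ t_f).indicator u (t + (k : ℝ) * ε)) :=
    funext fun t => box_apply_eq t₀ t_f ε N c u t
  rw [hb]
  exact integrable_finset_sum _ fun k _ =>
    integrable_mulVec _ (hgint.comp_add_right ((k : ℝ) * ε))

/-- The hard direction, in the case where `c N` is invertible. -/
lemma key (t₀ t_f ε : ℝ) (hε : 0 < ε) {N : ℕ} (hN : 1 ≤ N)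
    (c : ℤ → Matrix (Fin d) (Fin d) ℂ) (hA : IsUnit (c (N : ℤ))) (u : ℝ → Fin d → ℂ)
    (hbox : Integrable (box t₀ t_f ε N c u) volume) :
    IntegrableOn u (Set.Icc t₀ t_f) volume := by
  obtain ⟨A, hAeq⟩ := hA
  set B := (↑A⁻¹ : Matrix (Fin d) (Fin d) ℂ) with hBdef
  have hBA : B * c (N : ℤ) = 1 := by rw [← hAeq]; exact A.inv_mul
  set g := (Set.Icc t₀ t_f).indicator u with hgdef
  set h : ℝ → Fin d → ℂ := fun s =>
      B.mulVec (box t₀ t_f ε N c u (s - (N : ℝ) * ε)) -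
        ∑ k ∈ Finset.Ico (-(N : ℤ)) (N : ℤ),
          B.mulVec ((c k).mulVec (g (s - (N : ℝ) * ε + (k : ℝ) * ε))) with hdef
  have hNmem : (N : ℤ) ∈ Finset.Icc (-(N : ℤ)) (N : ℤ) := by
    simp [Finset.mem_Icc]
  have hgh : ∀ s, h s = g s := by
    intro s
    have hsplit : ∑ k ∈ Finset.Icc (-(N : ℤ)) (N : ℤ),
        (c k).mulVec (g (s - (N : ℝ) * ε + (k : ℝ) * ε))
        = (∑ k ∈ Finset.Ico (-(N : ℤ)) (N : ℤ),
            (c k).mulVec (g (s - (N : ℝ) * ε + (k : ℝ) * ε)))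
          + (c (N : ℤ)).mulVec (g s) := by
      rw [← Finset.sum_erase_add _ _ hNmem, Finset.Icc_erase_right]
      congr 2
      push_cast
      ring
    have hmulsum : B.mulVec (∑ k ∈ Finset.Ico (-(N : ℤ)) (N : ℤ),
        (c k).mulVec (g (s - (N : ℝ) * ε + (k : ℝ) * ε)))
        = ∑ k ∈ Finset.Ico (-(N : ℤ)) (N : ℤ),
          B.mulVec ((c k).mulVec (g (s - (N : ℝ) * ε + (k : ℝ) * ε))) := by
      have := map_sum (Matrix.mulVecLin B)
        (fun k => (c k).mulVec (g (s - (N : ℝ) * ε + (k : ℝ) * ε)))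
        (Finset.Ico (-(N : ℤ)) (N : ℤ))
      simp only [Matrix.mulVecLin_apply] at this
      exact this
    rw [hdef]
    simp only [box_apply_eq t₀ t_f ε N c u (s - (N : ℝ) * ε), ← hgdef]
    rw [hsplit, Matrix.mulVec_add, hmulsum]
    rw [Matrix.mulVec_mulVec, hBA, Matrix.one_mulVec]
    abel
  have main : ∀ m : ℕ, IntegrableOn g (Set.Iio (t₀ + (m : ℝ) * ε)) volume := by
    intro m
    induction m with
    | zero =>
      have hz : IntegrableOn (fun _ : ℝ => (0 : Fin d → ℂ))
          (Set.Iio (t₀ + ((0 : ℕ) : ℝ) * ε)) volume := integrableOn_zero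
      refine hz.congr_fun ?_ measurableSet_Iio
      intro s hs
      have hs' : s < t₀ + (0 : ℕ) * ε := hs
      have : s ∉ Set.Icc t₀ t_f := by
        simp only [Set.mem_Icc, not_and_or]
        left
        push_neg
        simpa using hs'
      simp [hgdef, Set.indicator_of_notMem this]
    | succ m ih =>
      have hcast : t₀ + ((m + 1 : ℕ) : ℝ) * ε = t₀ + (m : ℝ) * ε + ε := by push_cast; ring
      rw [hcast, ← Set.Iio_union_Ico_eq_Iio (le_add_of_nonneg_right hε.le)]
      refine ih.union ?_
      set G := (Set.Iio (t₀ + (m : ℝ) * ε)).indicator g with hGdef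
      have hG : Integrable G volume := (integrable_indicator_iff measurableSet_Iio).mpr ih
      have hterm1 : Integrable
          (fun s => B.mulVec (box t₀ t_f ε N c u (s - (N : ℝ) * ε))) volume :=
        integrable_mulVec B (hbox.comp_sub_right ((N : ℝ) * ε))
      have hh' : Integrable (fun s =>
          B.mulVec (box t₀ t_f ε N c u (s - (N : ℝ) * ε)) -
            ∑ k ∈ Finset.Ico (-(N : ℤ)) (N : ℤ),
              B.mulVec ((c k).mulVec (G (s + ((k : ℝ) * ε - (N : ℝ) * ε))))) volume := by
        refine hterm1.sub (integrable_finset_sum _ fun k _ => ?_)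
        exact integrable_mulVec _ (integrable_mulVec _
          (hG.comp_add_right ((k : ℝ) * ε - (N : ℝ) * ε)))
      have hgeq : g = h := funext fun s => (hgh s).symm
      rw [hgeq]
      refine hh'.integrableOn.congr_fun ?_ measurableSet_Ico
      intro s hs
      beta_reduce
      rw [hdef]
      beta_reduce
      congr 1
      refine Finset.sum_congr rfl fun k hk => ?_
      have hk' : k < (N : ℤ) := (Finset.mem_Ico.mp hk).2
      have hkR : (k : ℝ) ≤ (N : ℝ) - 1 := by
        have : (k : ℝ) + 1 ≤ (N : ℝ) := by exact_mod_cast hk'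
        linarith
      have hargmem : s + ((k : ℝ) * ε - (N : ℝ) * ε) < t₀ + (m : ℝ) * ε := by
        have hs2 : s < t₀ + (m : ℝ) * ε + ε := hs.2
        nlinarith
      have : G (s + ((k : ℝ) * ε - (N : ℝ) * ε)) = g (s - (N : ℝ) * ε + (k : ℝ) * ε) := by
        rw [hGdef, Set.indicator_of_mem (Set.mem_Iio.mpr hargmem)]
        congr 1
        ring
      rw [this]
  obtain ⟨m, hm⟩ := exists_nat_gt ((t_f - t₀) / ε)
  have hsub : Set.Icc t₀ t_f ⊆ Set.Iio (t₀ + (m : ℝ) * ε) := by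
    intro s hs
    have : t_f - t₀ < (m : ℝ) * ε := by
      rw [div_lt_iff₀ hε] at hm
      exact hm
    have : s ≤ t_f := hs.2
    simp only [Set.mem_Iio]
    linarith [((div_lt_iff₀ hε).mp hm : t_f - t₀ < (m : ℝ) * ε)]
  have hgicc : IntegrableOn g (Set.Icc t₀ t_f) volume := (main m).mono_set hsub
  exact hgicc.congr_fun (fun s hs => Set.indicator_of_mem hs u) measurableSet_Icc

lemma chi_neg (t₀ t_f s : ℝ) : chi (-t_f) (-t₀) s = chi t₀ t_f (-s) := by
  have hmem : s ∈ Set.Icc (-t_f) (-t₀) ↔ -s ∈ Set.Icc t₀ t_f := by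
    simp only [Set.mem_Icc]
    constructor <;> rintro ⟨h1, h2⟩ <;> constructor <;> linarith
  by_cases h : s ∈ Set.Icc (-t_f) (-t₀)
  · rw [chi, chi, Set.indicator_of_mem h, Set.indicator_of_mem (hmem.mp h)]
  · rw [chi, chi, Set.indicator_of_notMem h,
      Set.indicator_of_notMem (fun hc => h (hmem.mpr hc))]

lemma box_neg (t₀ t_f ε : ℝ) (N : ℕ) (c : ℤ → Matrix (Fin d) (Fin d) ℂ)
    (u : ℝ → Fin d → ℂ) :
    box (-t_f) (-t₀) ε N (fun k => c (-k)) (fun t => u (-t))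
      = fun t => box t₀ t_f ε N c u (-t) := by
  funext t
  unfold box
  refine Finset.sum_nbij' (i := fun k => -k) (j := fun k => -k) ?_ ?_ ?_ ?_ ?_
  · intro k hk
    simp only [Finset.mem_Icc] at hk ⊢
    omega
  · intro k hk
    simp only [Finset.mem_Icc] at hk ⊢
    omega
  · intro k _; ring
  · intro k _; ring
  · intro k _
    beta_reduce
    rw [chi_neg, show -t + ((-k : ℤ) : ℝ) * ε = -(t + (k : ℝ) * ε) by push_cast; ring]

lemma integrableOn_of_neg {a b : ℝ} {f : ℝ → Fin d → ℂ}
    (hf : IntegrableOn (fun t => f (-t)) (Set.Icc (-b) (-a)) volume) :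
    IntegrableOn f (Set.Icc a b) volume := by
  have h1 : Integrable ((Set.Icc (-b) (-a)).indicator fun t => f (-t)) volume :=
    (integrable_indicator_iff measurableSet_Icc).mpr hf
  have h2 := h1.comp_neg
  have h3 : (fun t => (Set.Icc (-b) (-a)).indicator (fun s => f (-s)) (-t))
      = (Set.Icc a b).indicator f := by
    funext t
    have hmem : -t ∈ Set.Icc (-b) (-a) ↔ t ∈ Set.Icc a b := by
      simp only [Set.mem_Icc]
      constructor <;> rintro ⟨h1', h2'⟩ <;> constructor <;> linarith
    by_cases h : t ∈ Set.Icc a b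
    · rw [Set.indicator_of_mem (hmem.mpr h), Set.indicator_of_mem h, neg_neg]
    · rw [Set.indicator_of_notMem (fun hc => h (hmem.mp hc)), Set.indicator_of_notMem h]
  rw [h3] at h2
  exact (integrable_indicator_iff measurableSet_Icc).mp h2

end Aux

/-- if `c_N` or `c_{−N}` is invertible, then `□u` is Lebesgue–Bochner
integrable on `ℝ` iff `u` is integrable on `[t₀, t_f]`. -/
theorem stmt8 (t₀ t_f ε : ℝ) (ht : t₀ < t_f) (hε : 0 < ε)
    (d N : ℕ) (hd : 1 ≤ d) (hN : 1 ≤ N)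
    (c : ℤ → Matrix (Fin d) (Fin d) ℂ)
    (hinv : IsUnit (c (N : ℤ)) ∨ IsUnit (c (-(N : ℤ))))
    (u : ℝ → Fin d → ℂ) :
    Integrable (box t₀ t_f ε N c u) volume ↔ IntegrableOn u (Set.Icc t₀ t_f) volume := by
  constructor
  · intro hbox
    rcases hinv with hA | hA
    · exact key t₀ t_f ε hε hN c hA u hbox
    · -- reflect
      have hbox' : Integrable (box (-t_f) (-t₀) ε N (fun k => c (-k)) (fun t => u (-t)))
          volume := by
        rw [box_neg]
        exact hbox.comp_neg
      have hA' : IsUnit ((fun k => c (-k)) (N : ℤ)) := by simpa using hA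
      have := key (-t_f) (-t₀) ε hε hN (fun k => c (-k)) hA' (fun t => u (-t)) hbox'
      exact integrableOn_of_neg this
  · intro hu
    exact box_integrable t₀ t_f ε N c u hu
end

section
/- Let d ≥ 1 and β, γ ∈ ℂ^{d×d}. Define sequences (δ'_n) and (δ''_n) of d×d matrices by δ'₀ = δ''₀ = 0, δ'₁ = δ''₁ = I_d, δ'_{n+1} = β δ'_n + γ δ'_{n−1} and δ''_{n+1} = δ''_n β + δ''_{n−1} γ for all n ≥ 1. Then δ'_n = δ''_n for every n ∈ ℕ. -/
/-!
Put `u = 1 - βX - γX²`. The left recurrence says exactly that `u` is a left inverse of the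
generating series `Σ δ'_{n+1} Xⁿ`, and the right recurrence that `u` is a right inverse of
`Σ δ''_{n+1} Xⁿ`. In the ring of power series a left and a right inverse of the same element
coincide, so the two series, hence the two sequences, agree.
-/

open Matrix PowerSeries

namespace PowerSeries

variable {R : Type*} [Ring R]

noncomputable def genFunDenom (β γ : R) : R⟦X⟧ := 1 - C β * X - C γ * X ^ 2

theorem genFunDenom_mul_mk_succ {β γ : R} {a : ℕ → R} (h0 : a 0 = 0) (h1 : a 1 = 1)
    (hrec : ∀ n, a (n + 2) = β * a (n + 1) + γ * a n) :
    genFunDenom β γ * mk (fun n => a (n + 1)) = 1 := by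
  ext (_ | _ | n) <;>
    simp [genFunDenom, sub_mul, mul_assoc, pow_two, coeff_C_mul, coeff_succ_X_mul, h0, h1, hrec]

theorem mk_succ_mul_genFunDenom {β γ : R} {a : ℕ → R} (h0 : a 0 = 0) (h1 : a 1 = 1)
    (hrec : ∀ n, a (n + 2) = a (n + 1) * β + a n * γ) :
    mk (fun n => a (n + 1)) * genFunDenom β γ = 1 := by
  ext (_ | _ | n) <;>
    simp [genFunDenom, mul_sub, ← mul_assoc, pow_two, coeff_mul_C, coeff_succ_mul_X, h0, h1, hrec]

end PowerSeries

theorem stmt10_general (d : ℕ)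
    (β γ : Matrix (Fin d) (Fin d) ℂ)
    (δ' δ'' : ℕ → Matrix (Fin d) (Fin d) ℂ)
    (h'0 : δ' 0 = 0) (h'1 : δ' 1 = 1)
    (h''0 : δ'' 0 = 0) (h''1 : δ'' 1 = 1)
    (hrec' : ∀ n : ℕ, 1 ≤ n → δ' (n + 1) = β * δ' n + γ * δ' (n - 1))
    (hrec'' : ∀ n : ℕ, 1 ≤ n → δ'' (n + 1) = δ'' n * β + δ'' (n - 1) * γ) :
    ∀ n : ℕ, δ' n = δ'' n := by
  have hseries : mk (fun n => δ'' (n + 1)) = mk (fun n => δ' (n + 1)) :=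
    left_inv_eq_right_inv
      (mk_succ_mul_genFunDenom h''0 h''1 fun n => hrec'' (n + 1) n.succ_pos)
      (genFunDenom_mul_mk_succ h'0 h'1 fun n => hrec' (n + 1) n.succ_pos)
  rintro (_ | n)
  · rw [h'0, h''0]
  · simpa using (congrArg (coeff n) hseries).symm

/-- the left recurrence `δ'_{n+1} = β δ'_n + γ δ'_{n−1}` and the right
recurrence `δ''_{n+1} = δ''_n β + δ''_{n−1} γ`, with the same initial conditions
`δ₀ = 0`, `δ₁ = I_d`, produce the same sequence of matrices. -/
theorem stmt10 (d : ℕ) (hd : 1 ≤ d)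
    (β γ : Matrix (Fin d) (Fin d) ℂ)
    (δ' δ'' : ℕ → Matrix (Fin d) (Fin d) ℂ)
    (h'0 : δ' 0 = 0) (h'1 : δ' 1 = 1)
    (h''0 : δ'' 0 = 0) (h''1 : δ'' 1 = 1)
    (hrec' : ∀ n : ℕ, 1 ≤ n → δ' (n + 1) = β * δ' n + γ * δ' (n - 1))
    (hrec'' : ∀ n : ℕ, 1 ≤ n → δ'' (n + 1) = δ'' n * β + δ'' (n - 1) * γ) :
    ∀ n : ℕ, δ' n = δ'' n :=
  stmt10_general d β γ δ' δ'' h'0 h'1 h''0 h''1 hrec' hrec''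
end

section
/- Let d ≥ 1 and let ψ be an element of the free ℂ-algebra on two generators X, Y. For ζ, ξ ∈ ℂ^{d×d}, let ψ(ζ, ξ) ∈ ℂ^{d×d} denote the image of ψ under the ℂ-algebra homomorphism to the matrix algebra sending X ↦ ζ and Y ↦ ξ. Assume that the image of ψ under the ℂ-algebra homomorphism to the commutative polynomial ring ℂ[x, y] sending X ↦ x, Y ↦ y is a nonzero polynomial. Then the set {(ζ, ξ) ∈ (ℂ^{d×d})² : det(ψ(ζ, ξ)) ≠ 0} is open and dense in (ℂ^{d×d})². -/
/-!
The function `(ζ, ξ) ↦ det ψ(ζ, ξ)` is a polynomial in the matrix entries, hence analytic on the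
connected space `(ℂ^{d×d})²`; in particular its non-vanishing locus is open. At a scalar pair
`(a₀ I, a₁ I)` everything commutes, so `ψ(a₀ I, a₁ I) = (commEval ψ)(a) I` has determinant
`(commEval ψ)(a)^d`, which is nonzero for a suitable `a` because `commEval ψ ≠ 0`. By the identity
theorem an analytic function that is not identically zero cannot vanish on a nonempty open set,
so the non-vanishing locus is dense.
-/

open Matrix

/-- Evaluation of a noncommutative polynomial `ψ` (an element of the free `ℂ`-algebra on
two generators `X`, `Y`) at a pair of `d × d` matrices `(ζ, ξ)`: the image of `ψ` under
the unique `ℂ`-algebra homomorphism sending `X ↦ ζ` and `Y ↦ ξ`. -/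
noncomputable def matEval {d : ℕ} (ψ : FreeAlgebra ℂ (Fin 2))
    (ζ ξ : Matrix (Fin d) (Fin d) ℂ) : Matrix (Fin d) (Fin d) ℂ :=
  FreeAlgebra.lift ℂ ![ζ, ξ] ψ

/-- The image of `ψ` in the commutative polynomial ring `ℂ[x, y]`, i.e. under the
`ℂ`-algebra homomorphism `X ↦ x`, `Y ↦ y`. -/
noncomputable def commEval (ψ : FreeAlgebra ℂ (Fin 2)) : MvPolynomial (Fin 2) ℂ :=
  FreeAlgebra.lift ℂ (fun i => MvPolynomial.X i) ψ

theorem FreeAlgebra.lift_algebraMap {R ι A : Type*} [CommSemiring R] [Semiring A] [Algebra R A]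
    (a : ι → R) (ψ : FreeAlgebra R ι) :
    lift R (fun i ↦ algebraMap R A (a i)) ψ =
      algebraMap R A (MvPolynomial.eval a (lift R MvPolynomial.X ψ)) := by
  have hom : lift R (fun i ↦ algebraMap R A (a i)) =
      (Algebra.ofId R A).comp ((MvPolynomial.aeval a).comp (lift R MvPolynomial.X)) :=
    hom_ext (funext fun i ↦ by simp)
  rw [hom, ← MvPolynomial.coe_aeval_eq_eval]
  rfl

theorem matEval_algebraMap (d : ℕ) (ψ : FreeAlgebra ℂ (Fin 2)) (a : Fin 2 → ℂ) :
    matEval ψ (algebraMap ℂ (Matrix (Fin d) (Fin d) ℂ) (a 0)) (algebraMap ℂ _ (a 1)) =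
      algebraMap ℂ _ (MvPolynomial.eval a (commEval ψ)) := by
  rw [matEval, commEval, ← FreeAlgebra.lift_algebraMap]
  congr 2
  ext i : 1
  fin_cases i <;> rfl

theorem det_matEval_algebraMap (d : ℕ) (ψ : FreeAlgebra ℂ (Fin 2)) (a : Fin 2 → ℂ) :
    (matEval ψ (algebraMap ℂ (Matrix (Fin d) (Fin d) ℂ) (a 0)) (algebraMap ℂ _ (a 1))).det =
      MvPolynomial.eval a (commEval ψ) ^ d := by
  rw [matEval_algebraMap, Algebra.algebraMap_eq_smul_one, det_smul, det_one, mul_one,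
    Fintype.card_fin]

section Analytic

variable {𝕜 E : Type*} [NontriviallyNormedField 𝕜] [NormedAddCommGroup E] [NormedSpace 𝕜 E]

theorem AnalyticOnNhd.freeAlgebra_lift {A ι : Type*} [NormedRing A] [NormedAlgebra 𝕜 A]
    {s : Set E} {f : E → ι → A} (hf : ∀ i, AnalyticOnNhd 𝕜 (f · i) s) (ψ : FreeAlgebra 𝕜 ι) :
    AnalyticOnNhd 𝕜 (fun x ↦ FreeAlgebra.lift 𝕜 (f x) ψ) s := by
  induction ψ using FreeAlgebra.induction with
  | grade0 c => simpa only [AlgHom.commutes] using analyticOnNhd_const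
  | grade1 i => simpa only [FreeAlgebra.lift_ι_apply] using hf i
  | mul a b ha hb => simpa only [map_mul] using ha.mul hb
  | add a b ha hb =>
    simp only [map_add]
    exact ha.add hb

theorem AnalyticOnNhd.dense_setOf_ne_zero {F : Type*} [NormedAddCommGroup F] [NormedSpace 𝕜 F]
    [PreconnectedSpace E] {f : E → F} (hf : AnalyticOnNhd 𝕜 f Set.univ) {z : E} (hz : f z ≠ 0) :
    Dense {x | f x ≠ 0} := by
  rw [dense_iff_inter_open]
  rintro U hU ⟨x, hx⟩
  by_contra hempty
  have hvanish : f =ᶠ[nhds x] 0 := by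
    filter_upwards [hU.mem_nhds hx] with y hy
    by_contra hy0
    exact hempty ⟨y, hy, hy0⟩
  exact hz (hf.eqOn_zero_of_preconnected_of_eventuallyEq_zero isPreconnected_univ
    (Set.mem_univ x) hvanish (Set.mem_univ z))

end Analytic

section LinftyOp

/- Any normed-algebra structure on matrices serves; the `L∞`-operator norm is chosen because it
induces the product topology definitionally, so the continuity and density statements of this
section are about the standard topology. -/
attribute [local instance] Matrix.linftyOpNormedAddCommGroup Matrix.linftyOpNormedSpace
  Matrix.linftyOpNormedRing Matrix.linftyOpNormedAlgebra

theorem analyticOnNhd_det {n 𝕜 : Type*} [NontriviallyNormedField 𝕜] [CompleteSpace 𝕜]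
    [Fintype n] [DecidableEq n] :
    AnalyticOnNhd 𝕜 (det : Matrix n n 𝕜 → 𝕜) Set.univ := by
  have hdet : (det : Matrix n n 𝕜 → 𝕜) = fun M ↦
      MvPolynomial.eval (fun ij ↦ entryLinearMap 𝕜 𝕜 ij.1 ij.2 M) (det (mvPolynomialX n n 𝕜)) := by
    ext M
    rw [eval_det_mvPolynomialX]
    rfl
  rw [hdet]
  exact AnalyticOnNhd.eval_linearMap' _ _

theorem analyticOnNhd_det_matEval (d : ℕ) (ψ : FreeAlgebra ℂ (Fin 2)) :
    AnalyticOnNhd ℂ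
      (fun p : Matrix (Fin d) (Fin d) ℂ × Matrix (Fin d) (Fin d) ℂ ↦ (matEval ψ p.1 p.2).det)
      Set.univ := by
  have hmatEval : AnalyticOnNhd ℂ
      (fun p : Matrix (Fin d) (Fin d) ℂ × Matrix (Fin d) (Fin d) ℂ ↦ matEval ψ p.1 p.2)
      Set.univ := by
    refine AnalyticOnNhd.freeAlgebra_lift (fun i ↦ ?_) ψ
    fin_cases i
    · exact analyticOnNhd_fst
    · exact analyticOnNhd_snd
  exact analyticOnNhd_det.comp hmatEval (Set.mapsTo_univ _ _)

theorem continuous_det_matEval (d : ℕ) (ψ : FreeAlgebra ℂ (Fin 2)) :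
    Continuous
      (fun p : Matrix (Fin d) (Fin d) ℂ × Matrix (Fin d) (Fin d) ℂ ↦ (matEval ψ p.1 p.2).det) :=
  continuousOn_univ.mp (analyticOnNhd_det_matEval d ψ).continuousOn

theorem dense_setOf_det_matEval_ne_zero (d : ℕ) (ψ : FreeAlgebra ℂ (Fin 2))
    {z : Matrix (Fin d) (Fin d) ℂ × Matrix (Fin d) (Fin d) ℂ} (hz : (matEval ψ z.1 z.2).det ≠ 0) :
    Dense {p : Matrix (Fin d) (Fin d) ℂ × Matrix (Fin d) (Fin d) ℂ | (matEval ψ p.1 p.2).det ≠ 0} :=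
  (analyticOnNhd_det_matEval d ψ).dense_setOf_ne_zero hz

end LinftyOp

theorem stmt14_general (d : ℕ)
    (ψ : FreeAlgebra ℂ (Fin 2)) (hψ : commEval ψ ≠ 0) :
    IsOpen {p : Matrix (Fin d) (Fin d) ℂ × Matrix (Fin d) (Fin d) ℂ |
        (matEval ψ p.1 p.2).det ≠ 0} ∧
    Dense {p : Matrix (Fin d) (Fin d) ℂ × Matrix (Fin d) (Fin d) ℂ |
        (matEval ψ p.1 p.2).det ≠ 0} := by
  obtain ⟨a, ha⟩ : ∃ a, MvPolynomial.eval a (commEval ψ) ≠ 0 := by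
    contrapose! hψ
    exact MvPolynomial.funext fun a ↦ by simp [hψ a]
  have hdet_scalar : (matEval ψ (algebraMap ℂ (Matrix (Fin d) (Fin d) ℂ) (a 0))
      (algebraMap ℂ _ (a 1))).det ≠ 0 := by
    rw [det_matEval_algebraMap]
    exact pow_ne_zero d ha
  exact ⟨isOpen_compl_singleton.preimage (continuous_det_matEval d ψ),
    dense_setOf_det_matEval_ne_zero d ψ (z := (_, _)) hdet_scalar⟩

/-- if the commutative image of `ψ` in `ℂ[x, y]` is nonzero, then the set
of pairs of matrices `(ζ, ξ)` with `det(ψ(ζ, ξ)) ≠ 0` is open and dense. -/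
theorem stmt14 (d : ℕ) (hd : 1 ≤ d)
    (ψ : FreeAlgebra ℂ (Fin 2)) (hψ : commEval ψ ≠ 0) :
    IsOpen {p : Matrix (Fin d) (Fin d) ℂ × Matrix (Fin d) (Fin d) ℂ |
        (matEval ψ p.1 p.2).det ≠ 0} ∧
    Dense {p : Matrix (Fin d) (Fin d) ℂ × Matrix (Fin d) (Fin d) ℂ |
        (matEval ψ p.1 p.2).det ≠ 0} :=
  stmt14_general d ψ hψ
end

section
/- Let d ≥ 2, let l ≥ 1, and let ψ⁽¹⁾, …, ψ⁽ˡ⁾ be elements of the free ℂ-algebra on two generators X, Y. For ζ, ξ ∈ ℂ^{d×d}, let ψ⁽ᵏ⁾(ζ, ξ) ∈ ℂ^{d×d} denote the image of ψ⁽ᵏ⁾ under the ℂ-algebra homomorphism sending X ↦ ζ, Y ↦ ξ. Assume that for each k: (i) the image P⁽ᵏ⁾ of ψ⁽ᵏ⁾ under the ℂ-algebra homomorphism to ℂ[x, y] sending X ↦ x, Y ↦ y is nonzero; and (ii) the (1,2) entry Q⁽ᵏ⁾ of the 2×2 matrix over ℂ[x, y, z, t] obtained by evaluating ψ⁽ᵏ⁾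 at X ↦ [[x, z], [0, x]] and Y ↦ [[y, t], [0, y]] is nonzero. Then the set of pairs (ζ, ξ) ∈ (ℂ^{d×d})² such that every entry ψ⁽ᵏ⁾(ζ, ξ)_{ij} (1 ≤ i, j ≤ d, 1 ≤ k ≤ l) is nonzero and det(ψ⁽ᵏ⁾(ζ, ξ)) ≠ 0 for every k, is open and dense in (ℂ^{d×d})². -/
/-!
Each condition defining the set is the nonvanishing of a continuous function `f` on pairs of
matrices that is a polynomial along every complex line (evaluate `ψ` over `ℂ[t]`). Such a set
is open, and it is dense as soon as `f q ≠ 0` for one `q`: on the line from any `p` to `q` the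
restriction of `f` is a nonzero polynomial, so it vanishes at only finitely many points.

Witnesses come from two special evaluations. At scalar matrices `(a • 1, b • 1)`, `ψ` evaluates
to `P(a, b) • 1`, which handles the determinants and the diagonal entries. Since `E_ij ^ 2 = 0`
for `i ≠ j`, the evaluation at `(a • 1 + z • E_ij, b • 1 + t • E_ij)` factors through the dual
numbers `ℂ[ε]`, as does the evaluation at upper triangular `2 × 2` matrices defining `Q`; hence
the `(i, j)` entry equals `Q(a, b, z, t)`.
-/

open Matrix MvPolynomial

/-- Evaluation of a noncommutative polynomial `ψ` (an element of the free `ℂ`-algebra on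
two generators `X`, `Y`) at a pair `(ζ, ξ)` of elements of a `ℂ`-algebra: the image of
`ψ` under the unique `ℂ`-algebra homomorphism sending `X ↦ ζ` and `Y ↦ ξ`. -/
noncomputable def algEval {A : Type*} [Ring A] [Algebra ℂ A]
    (ψ : FreeAlgebra ℂ (Fin 2)) (ζ ξ : A) : A :=
  FreeAlgebra.lift ℂ ![ζ, ξ] ψ

/-- The `(1,2)` entry of the `2 × 2` matrix over `ℂ[x, y, z, t]` obtained by evaluating
`ψ` at `X ↦ [[x, z], [0, x]]` and `Y ↦ [[y, t], [0, y]]` (variables indexed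
`x ↦ 0, y ↦ 1, z ↦ 2, t ↦ 3`). -/
noncomputable def upperEntry (ψ : FreeAlgebra ℂ (Fin 2)) : MvPolynomial (Fin 4) ℂ :=
  (algEval ψ
    (!![X 0, X 2; 0, X 0] : Matrix (Fin 2) (Fin 2) (MvPolynomial (Fin 4) ℂ))
    (!![X 1, X 3; 0, X 1] : Matrix (Fin 2) (Fin 2) (MvPolynomial (Fin 4) ℂ))) 0 1

open scoped DualNumber

section Topology

variable {α : Type*} [TopologicalSpace α]

theorem isOpen_dense_inter {s t : Set α} (hs : IsOpen s ∧ Dense s) (ht : IsOpen t ∧ Dense t) :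
    IsOpen (s ∩ t) ∧ Dense (s ∩ t) :=
  ⟨hs.1.inter ht.1, hs.2.inter_of_isOpen_left ht.2 hs.1⟩

theorem isOpen_dense_iInter {ι : Type*} [Finite ι] {s : ι → Set α}
    (hs : ∀ i, IsOpen (s i) ∧ Dense (s i)) : IsOpen (⋂ i, s i) ∧ Dense (⋂ i, s i) :=
  ⟨isOpen_iInter_of_finite fun i => (hs i).1, Set.sInter_range s ▸
    (Set.finite_range s).dense_sInter (by simpa using fun i => (hs i).1)
      (by simpa using fun i => (hs i).2)⟩

end Topology

def IsPolynomialOnLines (𝕜 : Type*) {E : Type*} [Semiring 𝕜] [AddCommMonoid E] [Module 𝕜 E]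
    (f : E → 𝕜) : Prop :=
  ∀ p v : E, ∃ G : Polynomial 𝕜, ∀ t : 𝕜, f (p + t • v) = G.eval t

section PolynomialOnLines

variable {𝕜 E : Type*} [NontriviallyNormedField 𝕜] [CompleteSpace 𝕜] [AddCommGroup E] [Module 𝕜 E]
  [TopologicalSpace E] [ContinuousAdd E] [ContinuousSMul 𝕜 E]

theorem IsPolynomialOnLines.dense_setOf_ne_zero {f : E → 𝕜} (hf : IsPolynomialOnLines 𝕜 f)
    {q : E} (hq : f q ≠ 0) : Dense {p | f p ≠ 0} := by
  intro p
  obtain ⟨G, hG⟩ := hf p (q - p)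
  have hG₁ : G.eval 1 ≠ 0 := by simpa [← hG] using hq
  have hG₀ : G ≠ 0 := by rintro rfl; simp at hG₁
  have hdense : Dense {t : 𝕜 | G.IsRoot t}ᶜ :=
    (Polynomial.finite_setOfPred_isRoot hG₀).countable.dense_compl 𝕜
  have hline : Continuous fun t : 𝕜 => p + t • (q - p) := by fun_prop
  simpa using map_mem_closure hline (hdense 0) (t := {p | f p ≠ 0}) fun t ht => by
    rw [Set.mem_ofPred, hG]; exact ht

theorem IsPolynomialOnLines.isOpen_dense_setOf_ne_zero {f : E → 𝕜}
    (hf : IsPolynomialOnLines 𝕜 f) (hc : Continuous f) {q : E} (hq : f q ≠ 0) :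
    IsOpen {p | f p ≠ 0} ∧ Dense {p | f p ≠ 0} :=
  ⟨isOpen_ne_fun hc continuous_const, hf.dense_setOf_ne_zero hq⟩

end PolynomialOnLines

theorem exists_eval_ne_zero_of_ne_zero {R σ : Type*} [CommRing R] [IsDomain R] [Infinite R]
    {P : MvPolynomial σ R} (hP : P ≠ 0) :
    ∃ c, eval c P ≠ 0 := by
  by_contra! h
  exact hP (MvPolynomial.funext fun c => by simp [h c])

section algEval

variable {A B : Type*} [Ring A] [Algebra ℂ A] [Ring B] [Algebra ℂ B]

theorem algEval_map (φ : A →ₐ[ℂ] B) (ψ : FreeAlgebra ℂ (Fin 2)) (ζ ξ : A) :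
    φ (algEval ψ ζ ξ) = algEval ψ (φ ζ) (φ ξ) := by
  have : φ.comp (FreeAlgebra.lift ℂ ![ζ, ξ]) = FreeAlgebra.lift ℂ ![φ ζ, φ ξ] := by
    ext i
    fin_cases i <;> simp
  exact DFunLike.congr_fun this ψ

theorem continuous_algEval [TopologicalSpace A] [IsTopologicalRing A]
    (ψ : FreeAlgebra ℂ (Fin 2)) :
    Continuous fun p : A × A => algEval ψ p.1 p.2 := by
  induction ψ using FreeAlgebra.induction with
  | grade0 r => simpa [algEval] using continuous_const
  | grade1 i => fin_cases i <;> simp [algEval, continuous_fst, continuous_snd]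
  | mul p q hp hq => simp only [algEval, map_mul]; exact hp.mul hq
  | add p q hp hq => simp only [algEval, map_add]; exact hp.add hq

theorem commEval_eq_algEval (ψ : FreeAlgebra ℂ (Fin 2)) :
    commEval ψ = algEval ψ (X 0) (X 1) := by
  rw [commEval, algEval]
  congr
  ext i
  fin_cases i <;> rfl

theorem algEval_algebraMap (ψ : FreeAlgebra ℂ (Fin 2)) (c : Fin 2 → ℂ) :
    algEval ψ (algebraMap ℂ A (c 0)) (algebraMap ℂ A (c 1)) =
      algebraMap ℂ A (eval c (commEval ψ)) := by
  have := algEval_map ((Algebra.ofId ℂ A).comp (aeval c)) ψ (X 0) (X 1)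
  simpa [← commEval_eq_algEval, MvPolynomial.coe_aeval_eq_eval] using this.symm

end algEval

section DualNumber

variable {A : Type*} [Ring A] [Algebra ℂ A]

noncomputable def dualNumberLift (e : A) (he : e * e = 0) : ℂ[ε] →ₐ[ℂ] A :=
  DualNumber.lift ⟨(Algebra.ofId ℂ A, e), he, fun r => (Algebra.commutes r e).symm⟩

theorem dualNumberLift_apply (e : A) (he : e * e = 0) (w : ℂ[ε]) :
    dualNumberLift e he w = algebraMap ℂ A w.fst + w.snd • e := by
  rw [dualNumberLift, DualNumber.lift_apply_apply, Algebra.smul_def]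
  rfl

theorem dualNumberLift_eps (e : A) (he : e * e = 0) : dualNumberLift e he ε = e :=
  DualNumber.lift_apply_eps _

theorem algEval_algebraMap_add_smul (ψ : FreeAlgebra ℂ (Fin 2)) {e : A} (he : e * e = 0)
    (a b z t : ℂ) :
    algEval ψ (algebraMap ℂ A a + z • e) (algebraMap ℂ A b + t • e) =
      dualNumberLift e he
        (algEval ψ (algebraMap ℂ ℂ[ε] a + z • ε) (algebraMap ℂ ℂ[ε] b + t • ε)) := by
  simp [algEval_map, dualNumberLift_eps]

theorem algEval_single_apply {n : Type*} [Fintype n] [DecidableEq n]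
    (ψ : FreeAlgebra ℂ (Fin 2)) {i j : n} (hij : i ≠ j) (a b z t : ℂ) :
    (algEval ψ (algebraMap ℂ (Matrix n n ℂ) a + z • single i j 1)
        (algebraMap ℂ (Matrix n n ℂ) b + t • single i j 1) : Matrix n n ℂ) i j =
      (algEval ψ (algebraMap ℂ ℂ[ε] a + z • ε) (algebraMap ℂ ℂ[ε] b + t • ε)).snd := by
  rw [algEval_algebraMap_add_smul ψ (single_mul_single_of_ne (1 : ℂ) i j i hij.symm 1),
    dualNumberLift_apply]
  simp [algebraMap_matrix_apply, hij]

theorem eval_upperEntry (ψ : FreeAlgebra ℂ (Fin 2)) (c : Fin 4 → ℂ) :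
    eval c (upperEntry ψ) =
      (algEval ψ (algebraMap ℂ ℂ[ε] (c 0) + c 2 • ε)
        (algebraMap ℂ ℂ[ε] (c 1) + c 3 • ε)).snd := by
  have htri : ∀ u v : ℂ, (!![u, v; 0, u] : Matrix (Fin 2) (Fin 2) ℂ) =
      algebraMap ℂ _ u + v • single 0 1 1 := by
    intro u v
    ext i j
    fin_cases i <;> fin_cases j <;> simp [algebraMap_matrix_apply]
  rw [← algEval_single_apply ψ (i := (0 : Fin 2)) (j := 1) (by decide), ← htri, ← htri]
  have hgen : ∀ k l : Fin 4, (aeval c).mapMatrix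
      (!![X k, X l; 0, X k] : Matrix (Fin 2) (Fin 2) (MvPolynomial (Fin 4) ℂ)) =
        !![c k, c l; 0, c k] := by
    intro k l
    ext i j
    fin_cases i <;> fin_cases j <;> simp
  rw [← hgen 0 2, ← hgen 1 3, ← algEval_map, upperEntry]
  simp

end DualNumber

section Matrix

variable {n : Type*} [Fintype n] [DecidableEq n]

theorem exists_algEval_add_smul_eq_map_eval (ψ : FreeAlgebra ℂ (Fin 2))
    (ζ ξ ζ' ξ' : Matrix n n ℂ) :
    ∃ W : Matrix n n (Polynomial ℂ), ∀ t : ℂ,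
      algEval ψ (ζ + t • ζ') (ξ + t • ξ') = W.map (Polynomial.eval t) := by
  refine ⟨algEval ψ (ζ.map Polynomial.C + Polynomial.X (R := ℂ) • ζ'.map Polynomial.C)
    (ξ.map Polynomial.C + Polynomial.X (R := ℂ) • ξ'.map Polynomial.C), fun t => ?_⟩
  rw [← Polynomial.coe_aeval_eq_eval, ← AlgHom.mapMatrix_apply, algEval_map]
  congr 1 <;> ext i j <;> simp <;> ring

theorem isPolynomialOnLines_algEval_apply (ψ : FreeAlgebra ℂ (Fin 2)) (i j : n) :
    IsPolynomialOnLines ℂ fun p : Matrix n n ℂ × Matrix n n ℂ => algEval ψ p.1 p.2 i j := by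
  intro p v
  obtain ⟨W, hW⟩ := exists_algEval_add_smul_eq_map_eval ψ p.1 p.2 v.1 v.2
  exact ⟨W i j, fun t => by simp [hW]⟩

theorem isPolynomialOnLines_det_algEval (ψ : FreeAlgebra ℂ (Fin 2)) :
    IsPolynomialOnLines ℂ fun p : Matrix n n ℂ × Matrix n n ℂ => (algEval ψ p.1 p.2).det := by
  intro p v
  obtain ⟨W, hW⟩ := exists_algEval_add_smul_eq_map_eval ψ p.1 p.2 v.1 v.2
  exact ⟨W.det, fun t => by simp [hW, ← Polynomial.coe_evalRingHom, RingHom.map_det]⟩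

theorem exists_det_algEval_ne_zero {ψ : FreeAlgebra ℂ (Fin 2)} (h : commEval ψ ≠ 0) :
    ∃ p : Matrix n n ℂ × Matrix n n ℂ, (algEval ψ p.1 p.2).det ≠ 0 := by
  obtain ⟨c, hc⟩ := exists_eval_ne_zero_of_ne_zero h
  refine ⟨(algebraMap ℂ _ (c 0), algebraMap ℂ _ (c 1)), ?_⟩
  rw [algEval_algebraMap, algebraMap_eq_diagonal, det_diagonal]
  simpa using pow_ne_zero (Fintype.card n) hc

theorem exists_algEval_apply_ne_zero {ψ : FreeAlgebra ℂ (Fin 2)} (h₁ : commEval ψ ≠ 0)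
    (h₂ : upperEntry ψ ≠ 0) (i j : n) :
    ∃ p : Matrix n n ℂ × Matrix n n ℂ, algEval ψ p.1 p.2 i j ≠ 0 := by
  rcases eq_or_ne i j with rfl | hij
  · obtain ⟨c, hc⟩ := exists_eval_ne_zero_of_ne_zero h₁
    refine ⟨(algebraMap ℂ _ (c 0), algebraMap ℂ _ (c 1)), ?_⟩
    simpa [algEval_algebraMap, algebraMap_matrix_apply] using hc
  · obtain ⟨c, hc⟩ := exists_eval_ne_zero_of_ne_zero h₂
    refine ⟨(algebraMap ℂ _ (c 0) + c 2 • single i j 1,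
      algebraMap ℂ _ (c 1) + c 3 • single i j 1), ?_⟩
    rwa [algEval_single_apply ψ hij, ← eval_upperEntry]

end Matrix

theorem stmt15_general (d : ℕ) (l : ℕ)
    (ψ : Fin l → FreeAlgebra ℂ (Fin 2))
    (h₁ : ∀ k, commEval (ψ k) ≠ 0)
    (h₂ : ∀ k, upperEntry (ψ k) ≠ 0) :
    IsOpen {p : Matrix (Fin d) (Fin d) ℂ × Matrix (Fin d) (Fin d) ℂ |
        (∀ (k : Fin l) (i j : Fin d), algEval (ψ k) p.1 p.2 i j ≠ 0) ∧
        (∀ k : Fin l, (algEval (ψ k) p.1 p.2).det ≠ 0)} ∧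
    Dense {p : Matrix (Fin d) (Fin d) ℂ × Matrix (Fin d) (Fin d) ℂ |
        (∀ (k : Fin l) (i j : Fin d), algEval (ψ k) p.1 p.2 i j ≠ 0) ∧
        (∀ k : Fin l, (algEval (ψ k) p.1 p.2).det ≠ 0)} := by
  simp only [Set.ofPred_and, Set.ofPred_forall]
  refine isOpen_dense_inter
    (isOpen_dense_iInter fun k => isOpen_dense_iInter fun i => isOpen_dense_iInter fun j => ?_)
    (isOpen_dense_iInter fun k => ?_)
  · obtain ⟨q, hq⟩ := exists_algEval_apply_ne_zero (h₁ k) (h₂ k) i j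
    exact (isPolynomialOnLines_algEval_apply (ψ k) i j).isOpen_dense_setOf_ne_zero
      ((continuous_algEval (ψ k)).matrix_elem i j) hq
  · obtain ⟨q, hq⟩ := exists_det_algEval_ne_zero (n := Fin d) (h₁ k)
    exact (isPolynomialOnLines_det_algEval (ψ k)).isOpen_dense_setOf_ne_zero
      (continuous_algEval (ψ k)).matrix_det hq

/-- if each `ψ⁽ᵏ⁾` is generic (its commutative image in `ℂ[x,y]` is nonzero
and the `(1,2)` entry of its evaluation at the generic upper-triangular `2 × 2` matrices
is nonzero), then the set of pairs `(ζ, ξ)` of `d × d` matrices at which every entry of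
every `ψ⁽ᵏ⁾(ζ, ξ)` is nonzero and every `det(ψ⁽ᵏ⁾(ζ, ξ))` is nonzero, is open and dense. -/
theorem stmt15 (d : ℕ) (hd : 2 ≤ d) (l : ℕ) (hl : 1 ≤ l)
    (ψ : Fin l → FreeAlgebra ℂ (Fin 2))
    (h₁ : ∀ k, commEval (ψ k) ≠ 0)
    (h₂ : ∀ k, upperEntry (ψ k) ≠ 0) :
    IsOpen {p : Matrix (Fin d) (Fin d) ℂ × Matrix (Fin d) (Fin d) ℂ |
        (∀ (k : Fin l) (i j : Fin d), algEval (ψ k) p.1 p.2 i j ≠ 0) ∧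
        (∀ k : Fin l, (algEval (ψ k) p.1 p.2).det ≠ 0)} ∧
    Dense {p : Matrix (Fin d) (Fin d) ℂ × Matrix (Fin d) (Fin d) ℂ |
        (∀ (k : Fin l) (i j : Fin d), algEval (ψ k) p.1 p.2 i j ≠ 0) ∧
        (∀ k : Fin l, (algEval (ψ k) p.1 p.2).det ≠ 0)} :=
  stmt15_general d l ψ h₁ h₂
end

section
/- Let d ≥ 2 and m ≥ 1. For β, γ ∈ ℂ^{d×d} define (δ_n(β,γ)) by δ₀ = 0, δ₁ = I_d, δ_{n+1} = β δ_n + γ δ_{n−1} for n ≥ 1. Then the set of pairs (β, γ) ∈ (ℂ^{d×d})² such that det(β) ≠ 0, det(γ) ≠ 0, βγ ≠ γβ, and det(δ_n(β,γ)) ≠ 0 for all n ∈ {1, …, m}, is open and dense in (ℂ^{d×d})². -/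
open Matrix

/-- The sequence `δ_n(β, γ)` defined by `δ₀ = 0`, `δ₁ = I_d`,
`δ_{n+1} = β δ_n + γ δ_{n−1}`. -/
noncomputable def deltaSeq {d : ℕ} (β γ : Matrix (Fin d) (Fin d) ℂ) :
    ℕ → Matrix (Fin d) (Fin d) ℂ
  | 0 => 0
  | 1 => 1
  | (n + 2) => β * deltaSeq β γ (n + 1) + γ * deltaSeq β γ n

/-!
Each of the defining conditions says that an entire function of the entries of `(β, γ)` (a
determinant, the commutator `βγ - γβ`) does not vanish. Such a condition is open, and by the
identity theorem on the connected space `(ℂ^{d×d})²` it is dense as soon as the function is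
nonzero at a single point: `(1, 1)` for the determinants, a pair of matrix units for the
commutator (this needs `d ≥ 2`), and `(1, 0)`, where `δ_n = 1` for all `n ≥ 1`. Open dense
sets are residual, so by Baire their finite intersection is dense.
-/

open Set Filter

section Analytic

variable {𝕜 E F : Type*} [NontriviallyNormedField 𝕜] [NormedAddCommGroup E] [NormedSpace 𝕜 E]
  [NormedAddCommGroup F] [NormedSpace 𝕜 F] [PreconnectedSpace E] {f : E → F}

theorem AnalyticOnNhd.dense_setOf_ne_zero_s16 (hf : AnalyticOnNhd 𝕜 f univ) (h : ∃ x, f x ≠ 0) :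
    Dense {x | f x ≠ 0} := by
  intro x
  rw [mem_closure_iff_frequently]
  by_contra hx
  rw [not_frequently] at hx
  obtain ⟨y, hy⟩ := h
  exact hy (hf.eqOn_zero_of_preconnected_of_eventuallyEq_zero isPreconnected_univ (mem_univ x)
    (hx.mono fun _ => not_not.1) (mem_univ y))

theorem AnalyticOnNhd.eventually_residual_ne_zero (hf : AnalyticOnNhd 𝕜 f univ)
    (h : ∃ x, f x ≠ 0) : ∀ᶠ x in residual E, f x ≠ 0 :=
  residual_of_dense_open (isOpen_ne_fun hf.continuous continuous_const) (hf.dense_setOf_ne_zero_s16 h)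

end Analytic

section MatrixAnalytic

attribute [local instance] Matrix.normedAddCommGroup Matrix.normedSpace

variable {𝕜 E : Type*} [NontriviallyNormedField 𝕜] [NormedAddCommGroup E] [NormedSpace 𝕜 E]
  {l m n : Type*} [Fintype l] [Fintype m] [Fintype n] {x : E}

theorem analyticAt_matrix_iff {f : E → Matrix m n 𝕜} :
    AnalyticAt 𝕜 f x ↔ ∀ i j, AnalyticAt 𝕜 (fun y => f y i j) x :=
  (analyticAt_pi_iff (f := fun i y => f y i)).trans (forall_congr' fun _ => analyticAt_pi_iff)

theorem AnalyticAt.matrix_mul {f : E → Matrix l m 𝕜} {g : E → Matrix m n 𝕜}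
    (hf : AnalyticAt 𝕜 f x) (hg : AnalyticAt 𝕜 g x) : AnalyticAt 𝕜 (fun y => f y * g y) x := by
  rw [analyticAt_matrix_iff] at *
  intro i j
  simp only [Matrix.mul_apply]
  exact Finset.analyticAt_fun_sum _ fun k _ => (hf i k).mul (hg k j)

theorem AnalyticAt.matrix_det [DecidableEq n] {f : E → Matrix n n 𝕜} (hf : AnalyticAt 𝕜 f x) :
    AnalyticAt 𝕜 (fun y => (f y).det) x := by
  rw [analyticAt_matrix_iff] at hf
  simp only [Matrix.det_apply']
  exact Finset.analyticAt_fun_sum _ fun σ _ =>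
    analyticAt_const.mul (Finset.analyticAt_fun_prod _ fun i _ => hf (σ i) i)

variable {d : ℕ}

theorem analyticAt_deltaSeq (k : ℕ) (p : Matrix (Fin d) (Fin d) ℂ × Matrix (Fin d) (Fin d) ℂ) :
    AnalyticAt ℂ (fun q : Matrix (Fin d) (Fin d) ℂ × Matrix (Fin d) (Fin d) ℂ =>
      deltaSeq q.1 q.2 k) p := by
  induction k using Nat.twoStepInduction with
  | zero => exact analyticAt_const
  | one => exact analyticAt_const
  | more k hk hk' =>
    exact (analyticAt_fst.matrix_mul hk').add (analyticAt_snd.matrix_mul hk)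

theorem analyticOnNhd_det_deltaSeq (k : ℕ) :
    AnalyticOnNhd ℂ (fun q : Matrix (Fin d) (Fin d) ℂ × Matrix (Fin d) (Fin d) ℂ =>
      (deltaSeq q.1 q.2 k).det) univ :=
  fun p _ => (analyticAt_deltaSeq k p).matrix_det

theorem continuous_deltaSeq (k : ℕ) :
    Continuous (fun q : Matrix (Fin d) (Fin d) ℂ × Matrix (Fin d) (Fin d) ℂ =>
      deltaSeq q.1 q.2 k) :=
  AnalyticOnNhd.continuous fun p _ => analyticAt_deltaSeq k p

end MatrixAnalytic

-- Makes `(ℂ^{d×d})²` a Baire space for its product topology.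
instance Matrix.locallyCompactSpace {m n R : Type*} [Finite m] [Finite n] [TopologicalSpace R]
    [LocallyCompactSpace R] : LocallyCompactSpace (Matrix m n R) :=
  inferInstanceAs (LocallyCompactSpace (m → n → R))

theorem deltaSeq_one_zero {d k : ℕ} (hk : k ≠ 0) :
    deltaSeq (1 : Matrix (Fin d) (Fin d) ℂ) 0 k = 1 := by
  induction k using Nat.twoStepInduction with
  | zero => exact absurd rfl hk
  | one => rfl
  | more k _ ih => rw [deltaSeq, ih k.succ_ne_zero, Matrix.one_mul, Matrix.zero_mul, add_zero]

theorem Matrix.single_mul_single_ne_single_mul_single {n R : Type*} [Fintype n] [DecidableEq n]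
    [Semiring R] [Nontrivial R] {i j : n} (hij : i ≠ j) :
    single i i (1 : R) * single i j 1 ≠ single i j 1 * single i i 1 := by
  intro h
  simpa [hij] using congrFun (congrFun h i) j

theorem stmt16_general (d : ℕ) (hd : 2 ≤ d) (m : ℕ) :
    IsOpen {p : Matrix (Fin d) (Fin d) ℂ × Matrix (Fin d) (Fin d) ℂ |
        p.1.det ≠ 0 ∧ p.2.det ≠ 0 ∧ p.1 * p.2 ≠ p.2 * p.1 ∧
        ∀ n ∈ Finset.Icc 1 m, (deltaSeq p.1 p.2 n).det ≠ 0} ∧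
    Dense {p : Matrix (Fin d) (Fin d) ℂ × Matrix (Fin d) (Fin d) ℂ |
        p.1.det ≠ 0 ∧ p.2.det ≠ 0 ∧ p.1 * p.2 ≠ p.2 * p.1 ∧
        ∀ n ∈ Finset.Icc 1 m, (deltaSeq p.1 p.2 n).det ≠ 0} := by
  constructor
  · refine isOpen_iff_mem_nhds.2 fun p ⟨h₁, h₂, h₃, h₄⟩ => ?_
    filter_upwards [continuous_fst.matrix_det.continuousAt.eventually_ne h₁,
      continuous_snd.matrix_det.continuousAt.eventually_ne h₂,
      (continuous_fst.matrix_mul continuous_snd).continuousAt.ne_iff_eventually_ne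
        (continuous_snd.matrix_mul continuous_fst).continuousAt |>.1 h₃,
      (Filter.eventually_all_finset _).2 fun n hn =>
        (continuous_deltaSeq n).matrix_det.continuousAt.eventually_ne (h₄ n hn)]
      with q hq₁ hq₂ hq₃ hq₄ using ⟨hq₁, hq₂, hq₃, hq₄⟩
  · let := Matrix.normedAddCommGroup (n := Fin d) (m := Fin d) (α := ℂ)
    let := Matrix.normedSpace (n := Fin d) (m := Fin d) (R := ℂ) (α := ℂ)
    have hij : (⟨0, by omega⟩ : Fin d) ≠ ⟨1, by omega⟩ := by simp
    refine dense_of_mem_residual ?_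
    filter_upwards [AnalyticOnNhd.eventually_residual_ne_zero
        (fun p _ => analyticAt_fst.matrix_det) ⟨(1, 1), by simp⟩,
      AnalyticOnNhd.eventually_residual_ne_zero
        (fun p _ => analyticAt_snd.matrix_det) ⟨(1, 1), by simp⟩,
      AnalyticOnNhd.eventually_residual_ne_zero
        (fun p _ => (analyticAt_fst.matrix_mul analyticAt_snd).sub
          (analyticAt_snd.matrix_mul analyticAt_fst))
        ⟨(single _ _ 1, single _ _ 1), sub_ne_zero.2 (single_mul_single_ne_single_mul_single hij)⟩,
      (Filter.eventually_all_finset _).2 fun n (hn : n ∈ Finset.Icc 1 m) =>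
        (analyticOnNhd_det_deltaSeq n).eventually_residual_ne_zero
          ⟨(1, 0), by
            simp [deltaSeq_one_zero (Nat.one_le_iff_ne_zero.1 (Finset.mem_Icc.1 hn).1)]⟩]
      with q hq₁ hq₂ hq₃ hq₄ using ⟨hq₁, hq₂, sub_ne_zero.1 hq₃, hq₄⟩

/-- the set of pairs `(β, γ)` such that `β` and `γ` are invertible,
`β` and `γ` do not commute, and `det(δ_n(β, γ)) ≠ 0` for all `n ∈ {1, …, m}`,
is open and dense in the space of pairs of `d × d` complex matrices. -/
theorem stmt16 (d : ℕ) (hd : 2 ≤ d) (m : ℕ) (hm : 1 ≤ m) :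
    IsOpen {p : Matrix (Fin d) (Fin d) ℂ × Matrix (Fin d) (Fin d) ℂ |
        p.1.det ≠ 0 ∧ p.2.det ≠ 0 ∧ p.1 * p.2 ≠ p.2 * p.1 ∧
        ∀ n ∈ Finset.Icc 1 m, (deltaSeq p.1 p.2 n).det ≠ 0} ∧
    Dense {p : Matrix (Fin d) (Fin d) ℂ × Matrix (Fin d) (Fin d) ℂ |
        p.1.det ≠ 0 ∧ p.2.det ≠ 0 ∧ p.1 * p.2 ≠ p.2 * p.1 ∧
        ∀ n ∈ Finset.Icc 1 m, (deltaSeq p.1 p.2 n).det ≠ 0} :=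
  stmt16_general d hd m
end

section
/- Fix real numbers t₀ < t_f, ε > 0, an integer d ≥ 1, matrices c₋₁, c₀, c₁, α ∈ ℂ^{d×d} with c₁ invertible. Suppose u, f : ℝ → ℂ^d satisfy, for every t ∈ ℝ, α ⬝ u(t) + Σ_{k=−1}^{1} χ(t+kε) · (c_k ⬝ u(t+kε)) = f(t). Set β = −c₁⁻¹(α + c₀), γ = −c₁⁻¹c₋₁, and define (δ_n) by δ₀ = 0, δ₁ = I_d, δ_{n+1} = β δ_n + γ δ_{n−1} for n ≥ 1. Then for every τ ∈ [t₀, t₀+ε) and every integer n ≥ 1 with τ + nε ≤ t_f, u(τ + nε) = δ_n ⬝ u(τ+ε) + (δ_{n−1} γ) ⬝ u(τ) + Σ_{k=1}^{n−1} (δ_{n−k} c₁⁻¹) ⬝ f(τ + kε). -/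
open Matrix

/-- explicit form of a solution of `α u + 𝒞 ⋆ (χ u) = f` (case `N = 1`)
inside `[t₀, t_f]` in terms of its restrictions to `[t₀, t₀+ε)` and `[t₀+ε, t₀+2ε)`:
for `τ ∈ [t₀, t₀+ε)` and `n ≥ 1` with `τ + nε ≤ t_f`,
`u(τ + nε) = δ_n u(τ+ε) + (δ_{n−1} γ) u(τ) + Σ_{k=1}^{n−1} (δ_{n−k} c₁⁻¹) f(τ + kε)`,
where `β = −c₁⁻¹(α + c₀)`, `γ = −c₁⁻¹ c₋₁` and `δ₀ = 0`, `δ₁ = I_d`,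
`δ_{n+1} = β δ_n + γ δ_{n−1}`. -/
theorem stmt18 (t₀ t_f ε : ℝ) (ht : t₀ < t_f) (hε : 0 < ε)
    (d : ℕ) (hd : 1 ≤ d)
    (cm c0 c1 α : Matrix (Fin d) (Fin d) ℂ) (hc1 : IsUnit c1)
    (u f : ℝ → Fin d → ℂ)
    (hu : ∀ t : ℝ,
      α.mulVec (u t)
        + (chi t₀ t_f (t - ε) • cm.mulVec (u (t - ε))
          + chi t₀ t_f t • c0.mulVec (u t)
          + chi t₀ t_f (t + ε) • c1.mulVec (u (t + ε))) = f t)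
    (β γ : Matrix (Fin d) (Fin d) ℂ)
    (hβ : β = -(c1⁻¹ * (α + c0))) (hγ : γ = -(c1⁻¹ * cm))
    (δ : ℕ → Matrix (Fin d) (Fin d) ℂ)
    (h0 : δ 0 = 0) (h1 : δ 1 = 1)
    (hrec : ∀ n : ℕ, 1 ≤ n → δ (n + 1) = β * δ n + γ * δ (n - 1)) :
    ∀ τ : ℝ, t₀ ≤ τ → τ < t₀ + ε →
      ∀ n : ℕ, 1 ≤ n → τ + n * ε ≤ t_f →
        u (τ + n * ε)
          = (δ n).mulVec (u (τ + ε)) + (δ (n - 1) * γ).mulVec (u τ)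
            + ∑ k ∈ Finset.Icc 1 (n - 1), (δ (n - k) * c1⁻¹).mulVec (f (τ + k * ε)) := by
  intro τ hτ0 hτε
  have hchi : ∀ t : ℝ, t₀ ≤ t → t ≤ t_f → chi t₀ t_f t = 1 := fun t ha hb =>
    Set.indicator_of_mem (Set.mem_Icc.mpr ⟨ha, hb⟩) _
  have hdet : c1⁻¹ * c1 = 1 :=
    Matrix.nonsing_inv_mul _ ((Matrix.isUnit_iff_isUnit_det c1).mp hc1)
  have hstep : ∀ t : ℝ, t₀ ≤ t - ε → t + ε ≤ t_f →
      u (t + ε) = β.mulVec (u t) + γ.mulVec (u (t - ε)) + c1⁻¹.mulVec (f t) := by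
    intro t ha hb
    have ht1 : t₀ ≤ t := by linarith
    have ht2 : t ≤ t_f := by linarith
    have heq := hu t
    rw [hchi (t - ε) ha (by linarith), hchi t ht1 ht2,
      hchi (t + ε) (by linarith) hb] at heq
    simp only [one_smul] at heq
    have h3 : c1.mulVec (u (t + ε))
        = f t - α.mulVec (u t) - cm.mulVec (u (t - ε)) - c0.mulVec (u t) := by
      rw [← heq]; abel
    have h4 := congrArg (c1⁻¹.mulVec) h3
    rw [Matrix.mulVec_mulVec, hdet, Matrix.one_mulVec] at h4
    rw [h4, hβ, hγ]
    simp only [Matrix.mulVec_sub, Matrix.mulVec_add, Matrix.neg_mulVec, ← Matrix.mulVec_mulVec,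
      Matrix.add_mulVec]
    abel
  suffices H : ∀ m : ℕ, τ + ((m : ℝ) + 1) * ε ≤ t_f →
      u (τ + ((m : ℝ) + 1) * ε) = (δ (m + 1)).mulVec (u (τ + ε)) + (δ m * γ).mulVec (u τ)
        + ∑ k ∈ Finset.Icc 1 m, (δ (m + 1 - k) * c1⁻¹).mulVec (f (τ + (k : ℝ) * ε)) by
    intro n hn hle
    obtain ⟨m, rfl⟩ : ∃ m, n = m + 1 := ⟨n - 1, by omega⟩
    have hc : ((m + 1 : ℕ) : ℝ) = (m : ℝ) + 1 := by push_cast; ring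
    rw [hc]
    have := H m (by rw [← hc]; exact hle)
    simpa using this
  intro m
  induction m using Nat.twoStepInduction with
  | zero =>
    intro _
    simp [h0, h1, Matrix.one_mulVec]
  | one =>
    intro hle
    have e1 : τ + ((1 : ℕ) : ℝ) * ε + ε = τ + (((1 : ℕ) : ℝ) + 1) * ε := by push_cast; ring
    have e2 : (τ + ((1 : ℕ) : ℝ) * ε) - ε = τ := by push_cast; ring
    have hs := hstep (τ + ((1 : ℕ) : ℝ) * ε) (by rw [e2]; exact hτ0) (by rw [e1]; exact hle)
    rw [e1, e2] at hs
    have hδ2 : δ 2 = β := by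
      have := hrec 1 le_rfl
      simp [h0, h1] at this
      simpa using this
    rw [hs, hδ2, h1]
    simp [Matrix.one_mul, h1]
  | more m ih1 ih2 =>
    intro hle
    -- abbreviations
    have hle2 : τ + ((m : ℝ) + 1 + 1) * ε ≤ t_f := by push_cast at hle ⊢; nlinarith
    have hle1 : τ + ((m : ℝ) + 1) * ε ≤ t_f := by push_cast at hle ⊢; nlinarith
    have e1 : τ + (((m + 1 : ℕ) : ℝ) + 1) * ε + ε = τ + (((m + 2 : ℕ) : ℝ) + 1) * ε := by
      push_cast; ring
    have e2 : (τ + (((m + 1 : ℕ) : ℝ) + 1) * ε) - ε = τ + ((m : ℝ) + 1) * ε := by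
      push_cast; ring
    have hτ1 : t₀ ≤ (τ + (((m + 1 : ℕ) : ℝ) + 1) * ε) - ε := by
      rw [e2]; nlinarith
    have hs := hstep (τ + (((m + 1 : ℕ) : ℝ) + 1) * ε) hτ1 (by rw [e1]; exact hle)
    rw [e1, e2] at hs
    have ihA := ih2 (by push_cast at hle2 ⊢; linarith)
    have ihB := ih1 hle1
    rw [ihA] at hs
    rw [ihB] at hs
    rw [hs]
    -- now pure algebra
    have hδ3 : δ (m + 3) = β * δ (m + 2) + γ * δ (m + 1) := by
      have := hrec (m + 2) (by omega)
      simpa using this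
    have hδ2 : δ (m + 2) = β * δ (m + 1) + γ * δ m := by
      have := hrec (m + 1) (by omega)
      simpa using this
    -- RHS sum splitting
    have hsplit : ∑ k ∈ Finset.Icc 1 (m + 2), (δ (m + 3 - k) * c1⁻¹).mulVec (f (τ + (k : ℝ) * ε))
        = (∑ k ∈ Finset.Icc 1 (m + 1), (δ (m + 3 - k) * c1⁻¹).mulVec (f (τ + (k : ℝ) * ε)))
          + (δ 1 * c1⁻¹).mulVec (f (τ + ((m : ℝ) + 2) * ε)) := by
      have e3 : m + 3 - (m + 1 + 1) = 1 := by omega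
      have e4 : ((m + 1 + 1 : ℕ) : ℝ) = (m : ℝ) + 2 := by push_cast; ring
      rw [Finset.sum_Icc_succ_top (by omega), e3, e4]
    have hterm : ∀ k ∈ Finset.Icc 1 (m + 1),
        (δ (m + 3 - k) * c1⁻¹).mulVec (f (τ + (k : ℝ) * ε))
          = β.mulVec ((δ (m + 2 - k) * c1⁻¹).mulVec (f (τ + (k : ℝ) * ε)))
            + γ.mulVec ((δ (m + 1 - k) * c1⁻¹).mulVec (f (τ + (k : ℝ) * ε))) := by
      intro k hk
      simp only [Finset.mem_Icc] at hk
      have h1k : 1 ≤ m + 2 - k := by omega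
      have : δ (m + 3 - k) = β * δ (m + 2 - k) + γ * δ (m + 1 - k) := by
        have := hrec (m + 2 - k) h1k
        have e3 : m + 2 - k + 1 = m + 3 - k := by omega
        have e4 : m + 2 - k - 1 = m + 1 - k := by omega
        rw [e3, e4] at this
        exact this
      rw [this]
      simp only [Matrix.add_mul, Matrix.add_mulVec, Matrix.mul_assoc,
        ← Matrix.mulVec_mulVec]
    have hγsum : ∑ k ∈ Finset.Icc 1 (m + 1),
        γ.mulVec ((δ (m + 1 - k) * c1⁻¹).mulVec (f (τ + (k : ℝ) * ε)))
        = ∑ k ∈ Finset.Icc 1 m,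
            γ.mulVec ((δ (m + 1 - k) * c1⁻¹).mulVec (f (τ + (k : ℝ) * ε))) := by
      rw [Finset.sum_Icc_succ_top (by omega)]
      simp [h0]
    have msum : ∀ (A : Matrix (Fin d) (Fin d) ℂ) (s : Finset ℕ) (g : ℕ → Fin d → ℂ),
        A.mulVec (∑ k ∈ s, g k) = ∑ k ∈ s, A.mulVec (g k) := by
      intro A s g
      exact map_sum A.mulVecLin g s
    have ef : τ + (((m + 1 : ℕ) : ℝ) + 1) * ε = τ + ((m : ℝ) + 2) * ε := by push_cast; ring
    rw [hsplit, Finset.sum_congr rfl hterm, Finset.sum_add_distrib, hγsum, hδ3, hδ2, ef]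
    simp only [Matrix.mulVec_add, Matrix.add_mulVec, Matrix.add_mul,
      ← Matrix.mulVec_mulVec, h1, Matrix.one_mul, msum,
      show (m + 1 + 1 : ℕ) = m + 2 from by norm_num]
    abel
end
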